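/- arXiv:1707.09817 — 8 statements merged into one kernel-verified Lean document; each statement's English description precedes it below -/
import Mathlib

section
/- For every integer k ≥ 3, the vertex set of every connected graph of maximum degree at most k that is not isomorphic to K_{k+1} can be partitioned into sets A and B, where A is an independent set and B induces a (k-2)-degenerate graph. -/
open SimpleGraph Set

/-- A set of vertices is independent in `G`. -/
def Indep {V : Type*} (G : SimpleGraph V) (A : Set V) : Prop :=
  ∀ u ∈ A, ∀ v ∈ A, ¬ G.Adj u v

/-- The subgraph of `G` induced by `B` is `d`-degenerate: every finite nonempty
subset of `B` contains a vertex with at most `d` neighbours inside it. -/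
def DegenerateOn {V : Type*} (G : SimpleGraph V) (B : Set V) (d : ℕ) : Prop :=
  ∀ s : Set V, s ⊆ B → s.Finite → s.Nonempty →
    ∃ v ∈ s, (s ∩ G.neighborSet v).ncard ≤ d

/-- `G` is `d`-degenerate. -/
def Degenerate {V : Type*} (G : SimpleGraph V) (d : ℕ) : Prop :=
  DegenerateOn G Set.univ d

/-- `G` is near-bipartite: its vertex set is partitioned into an independent set `A`
and a set `B` inducing a forest. -/
def NearBipartite {V : Type*} (G : SimpleGraph V) : Prop :=
  ∃ A B : Set V, A ∪ B = Set.univ ∧ Disjoint A B ∧ Indep G A ∧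
    (G.induce B).IsAcyclic

/-- `G` has a `k`-degenerate decomposition: a partition into an independent set `A`
and a set `B` inducing a `(k-2)`-degenerate graph. -/
def KDegenDecomp {V : Type*} (G : SimpleGraph V) (k : ℕ) : Prop :=
  ∃ A B : Set V, A ∪ B = Set.univ ∧ Disjoint A B ∧ Indep G A ∧
    DegenerateOn G B (k - 2)


/-!
Rank the vertices by their distance to a set of roots and place them greedily, farthest
first: a vertex joins `A` unless one of its neighbours is already in `A`, in which case it
joins `B`. A non-root vertex has a neighbour of smaller rank, so at most `k - 1` of its
neighbours are placed before it, and if it joins `B` one of those is in `A`; thus it has at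
most `k - 2` neighbours in `B` when it is placed, which makes `B` `(k-2)`-degenerate.

If some vertex has degree less than `k`, it is the only root. If `G` is `k`-regular, then,
since `G ≠ K_{k+1}`, Lovász's lemma from the proof of Brooks' theorem yields non-adjacent
`x`, `y` such that every other vertex reaches a common neighbour of `x` and `y` in
`G - x - y`. We put `x` and `y` into `A` beforehand and take their common neighbours as
roots, each of which has only `k - 2` neighbours other than `x` and `y`.
-/

section Development

variable {V : Type*} {G : SimpleGraph V}

/-- `ReachIn G W u u` holds even for `u ∉ W`. -/
def ReachIn (G : SimpleGraph V) (W : Set V) : V → V → Prop :=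
  Relation.ReflTransGen fun a b => G.Adj a b ∧ a ∈ W ∧ b ∈ W

namespace ReachIn

variable {W W' D X : Set V} {u v w c : V}

theorem refl : ReachIn G W u u := Relation.ReflTransGen.refl

theorem single (h : G.Adj u v) (hu : u ∈ W) (hv : v ∈ W) : ReachIn G W u v :=
  Relation.ReflTransGen.single ⟨h, hu, hv⟩

theorem tail (h : ReachIn G W u v) (hvw : G.Adj v w) (hv : v ∈ W) (hw : w ∈ W) :
    ReachIn G W u w :=
  Relation.ReflTransGen.tail h ⟨hvw, hv, hw⟩

theorem trans (h₁ : ReachIn G W u v) (h₂ : ReachIn G W v w) : ReachIn G W u w :=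
  Relation.ReflTransGen.trans h₁ h₂

theorem symm (h : ReachIn G W u v) : ReachIn G W v u := by
  induction h with
  | refl => exact refl
  | tail _ hstep ih => exact (single hstep.1.symm hstep.2.2 hstep.2.1).trans ih

theorem mono (hW : W ⊆ W') (h : ReachIn G W u v) : ReachIn G W' u v :=
  Relation.ReflTransGen.mono (fun _ _ hab => ⟨hab.1, hW hab.2.1, hW hab.2.2⟩) _ _ h

theorem of_reachable (h : G.Reachable u v) : ReachIn G univ u v := by
  obtain ⟨p⟩ := h
  induction p with
  | nil => exact refl
  | cons hadj _ ih => exact (single hadj (mem_univ _) (mem_univ _)).trans ih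

theorem exists_adj_of_ne (h : ReachIn G W u v) (huv : u ≠ v) : ∃ t ∈ W, G.Adj u t := by
  rcases Relation.ReflTransGen.cases_head h with rfl | ⟨t, hstep, -⟩
  · exact absurd rfl huv
  · exact ⟨t, hstep.2.2, hstep.1⟩

theorem mem_of_closed (hD : ∀ a ∈ D, ∀ b ∈ W, G.Adj a b → b ∈ D) (h : ReachIn G W u v)
    (hu : u ∈ D) : v ∈ D := by
  induction h with
  | refl => exact hu
  | tail _ hstep ih => exact hD _ ih _ hstep.2.2 hstep.1

theorem restrict (hD : ∀ a ∈ D, ∀ b ∈ W, G.Adj a b → b ∈ D) (h : ReachIn G W u v)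
    (hu : u ∈ D) : ReachIn G D u v := by
  induction h with
  | refl => exact refl
  | tail h' hstep ih =>
    have ha := mem_of_closed hD h' hu
    exact ih.tail hstep.1 ha (hD _ ha _ hstep.2.2 hstep.1)

theorem exists_adj_boundary (h : ReachIn G W u v) (hu : u ∉ X) (hv : v ∈ X) :
    ∃ a b, G.Adj a b ∧ a ∈ W ∧ b ∈ W ∧ a ∉ X ∧ b ∈ X := by
  induction h using Relation.ReflTransGen.head_induction_on with
  | refl => exact absurd hv hu
  | @head a b hstep _ ih =>
    by_cases hb : b ∈ X
    · exact ⟨a, b, hstep.1, hstep.2.1, hstep.2.2, hu, hb⟩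
    · exact ih hb

/-- A walk that enters `X` must enter and leave it through `c`, so the detour can be cut out. -/
theorem avoid (hX : ∀ a ∈ X, ∀ b ∈ W, G.Adj a b → b ∈ X ∨ b = c) (h : ReachIn G W u v)
    (hu : u ∉ X) (hv : v ∉ X) : ReachIn G (W \ X) u v := by
  suffices ∀ t, ReachIn G W u t → (t ∉ X → ReachIn G (W \ X) u t) ∧
      (t ∈ X → ReachIn G (W \ X) u c) from (this v h).1 hv
  intro t ht
  induction ht with
  | refl => exact ⟨fun _ => refl, fun h => absurd h hu⟩
  | @tail a b _ hstep ih =>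
    obtain ⟨hab, haW, hbW⟩ := hstep
    by_cases ha : a ∈ X
    · refine ⟨fun hb => ?_, fun _ => ih.2 ha⟩
      obtain hbX | rfl := hX a ha b hbW hab
      · exact absurd hbX hb
      · exact ih.2 ha
    · refine ⟨fun hb => (ih.1 ha).tail hab ⟨haW, ha⟩ ⟨hbW, hb⟩, fun hb => ?_⟩
      obtain haX | rfl := hX b hb a haW hab.symm
      · exact absurd haX ha
      · exact ih.1 ha

end ReachIn

def componentIn (G : SimpleGraph V) (W : Set V) (z : V) : Set V :=
  {t | t ∈ W ∧ ReachIn G W z t}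

def ConnectedOn (G : SimpleGraph V) (U : Set V) : Prop :=
  ∀ u ∈ U, ∀ v ∈ U, ReachIn G U u v

section Components

variable {W U D : Set V} {z t s c : V}

theorem mem_componentIn_self (hz : z ∈ W) : z ∈ componentIn G W z := ⟨hz, ReachIn.refl⟩

theorem mem_componentIn_of_adj (ht : t ∈ componentIn G W z) (hts : G.Adj t s) (hs : s ∈ W) :
    s ∈ componentIn G W z :=
  ⟨hs, ht.2.tail hts ht.1 hs⟩

theorem disjoint_componentIn (hs : s ∈ W) (hsz : s ∉ componentIn G W z) :
    Disjoint (componentIn G W z) (componentIn G W s) :=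
  disjoint_left.mpr fun _ ht ht' => hsz ⟨hs, ht.2.trans ht'.2.symm⟩

theorem connectedOn_of_forall_reachIn (h : ∀ u ∈ U, ReachIn G U u c) : ConnectedOn G U :=
  fun u hu v hv => (h u hu).trans (h v hv).symm

theorem connectedOn_univ (h : G.Connected) : ConnectedOn G univ :=
  fun u _ v _ => ReachIn.of_reachable (h.preconnected u v)

end Components

/-- `D` is a component of `U \ {c}` other than the whole of it, so `c` is a cut vertex of `U`
and `D` one of the pieces it cuts off. -/
def IsFragment (G : SimpleGraph V) (U : Set V) (c : V) (D : Set V) : Prop :=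
  c ∈ U ∧ (∃ z ∈ U \ {c}, D = componentIn G (U \ {c}) z) ∧ (U \ insert c D).Nonempty

def IsMinFragment (G : SimpleGraph V) (U : Set V) (c : V) (D : Set V) : Prop :=
  IsFragment G U c D ∧ ∀ c' D', IsFragment G U c' D' → ¬ D' ⊂ D

namespace IsFragment

variable {U W D : Set V} {c d b u t : V}

theorem subset (hf : IsFragment G U c D) : D ⊆ U \ {c} := by
  obtain ⟨-, ⟨z, -, rfl⟩, -⟩ := hf
  exact fun _ h => h.1

theorem insert_subset (hf : IsFragment G U c D) : insert c D ⊆ U :=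
  Set.insert_subset hf.1 fun _ h => (hf.subset h).1

theorem nonempty (hf : IsFragment G U c D) : D.Nonempty := by
  obtain ⟨-, ⟨z, hz, rfl⟩, -⟩ := hf
  exact ⟨z, mem_componentIn_self hz⟩

theorem cut_notMem (hf : IsFragment G U c D) : c ∉ D := fun h => (hf.subset h).2 rfl

theorem mem_of_adj (hf : IsFragment G U c D) (hd : d ∈ D) (hdb : G.Adj d b) (hb : b ∈ U)
    (hbc : b ≠ c) : b ∈ D := by
  obtain ⟨-, ⟨z, -, rfl⟩, -⟩ := hf
  exact mem_componentIn_of_adj hd hdb ⟨hb, hbc⟩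

theorem mem_or_eq_of_adj (hf : IsFragment G U c D) (hd : d ∈ D) (hdb : G.Adj d b)
    (hb : b ∈ U) : b ∈ D ∨ b = c :=
  or_iff_not_imp_right.mpr (hf.mem_of_adj hd hdb hb)

theorem reachIn (hf : IsFragment G U c D) (hu : u ∈ D) (ht : t ∈ D) :
    ReachIn G (U \ {c}) u t := by
  obtain ⟨-, ⟨z, -, rfl⟩, -⟩ := hf
  exact hu.2.symm.trans ht.2

theorem connectedOn (hf : IsFragment G U c D) : ConnectedOn G D :=
  fun _ hu _ ht => (hf.reachIn hu ht).restrict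
    (fun _ ha _ hb hab => hf.mem_of_adj ha hab hb.1 hb.2) hu

theorem not_connectedOn (hf : IsFragment G U c D) : ¬ ConnectedOn G (U \ {c}) := by
  obtain ⟨-, ⟨z, hz, rfl⟩, t, htU, ht⟩ := hf
  intro hconn
  have htc : t ≠ c := fun h => ht (Or.inl h)
  exact ht (Or.inr ⟨⟨htU, htc⟩, hconn z hz t ⟨htU, htc⟩⟩)

theorem reachIn_diff (hf : IsFragment G U c D) (hW : W ⊆ U) (h : ReachIn G W u t)
    (hu : u ∉ D) (ht : t ∉ D) : ReachIn G (W \ D) u t :=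
  h.avoid (fun _ ha _ hb hab => hf.mem_or_eq_of_adj ha hab (hW hb)) hu ht

theorem reachIn_insert (hf : IsFragment G U c D) (hW : W ⊆ U) (h : ReachIn G W u t)
    (hu : u ∈ insert c D) (ht : t ∈ insert c D) : ReachIn G (W ∩ insert c D) u t := by
  have hout : ∀ a ∈ U \ insert c D, ∀ b ∈ W, G.Adj a b →
      b ∈ U \ insert c D ∨ b = c := by
    intro a ha b hb hab
    by_cases hbc : b = c
    · exact Or.inr hbc
    refine Or.inl ⟨hW hb, ?_⟩
    rintro (rfl | hbD)
    · exact hbc rfl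
    · exact ha.2 (mem_insert_iff.mpr ((hf.mem_or_eq_of_adj hbD hab.symm ha.1).symm))
  exact (h.avoid hout (fun h => h.2 hu) (fun h => h.2 ht)).mono
    fun s hs => ⟨hs.1, by_contra fun h => hs.2 ⟨hW hs.1, h⟩⟩

theorem connectedOn_insert (hf : IsFragment G U c D) (hU : ConnectedOn G U) :
    ConnectedOn G (insert c D) := fun u hu t ht =>
  (hf.reachIn_insert subset_rfl (hU u (hf.insert_subset hu) t (hf.insert_subset ht)) hu ht).mono
    inter_subset_right

theorem exists_adj (hnc : ∀ a ∈ U, ConnectedOn G (U \ {a})) {w : V} (hw : w ∈ U)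
    (hf : IsFragment G (U \ {w}) c D) : ∃ x ∈ D, G.Adj w x := by
  by_contra! hno
  have hclosed : ∀ a ∈ D, ∀ b ∈ U \ {c}, G.Adj a b → b ∈ D := by
    rintro a ha b ⟨hbU, hbc⟩ hab
    have hbw : b ≠ w := by rintro rfl; exact hno a ha hab.symm
    exact hf.mem_of_adj ha hab ⟨hbU, hbw⟩ hbc
  obtain ⟨z, hz⟩ := hf.nonempty
  obtain ⟨t, htU, ht⟩ := hf.2.2
  have htc : t ≠ c := fun h => ht (Or.inl h)
  have hzU := hf.subset hz
  have hzt := hnc c hf.1.1 z ⟨hzU.1.1, hzU.2⟩ t ⟨htU.1, htc⟩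
  exact ht (Or.inr (hzt.mem_of_closed hclosed hz))

theorem exists_adj_cut (hf : IsFragment G U c D) (hU : ConnectedOn G U) :
    ∃ b ∈ U \ insert c D, G.Adj c b := by
  obtain ⟨t, ht⟩ := hf.2.2
  obtain ⟨a, b, hab, haU, hbU, ha, hb⟩ :=
    (hU t ht.1 c hf.1).exists_adj_boundary ht.2 (mem_insert c D)
  rcases hb with rfl | hbD
  · exact ⟨a, ⟨haU, ha⟩, hab.symm⟩
  · rcases hf.mem_or_eq_of_adj hbD hab.symm haU with haD | rfl
    · exact absurd (mem_insert_of_mem _ haD) ha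
    · exact absurd (mem_insert _ _) ha

end IsFragment

namespace IsMinFragment

variable {U D D' : Set V} {c c' d : V}

/-- No vertex of a minimal fragment is a cut vertex: otherwise it would cut off a smaller
fragment inside `D`. -/
theorem connectedOn_diff (hmf : IsMinFragment G U c D) (hU : ConnectedOn G U) (hd : d ∈ D) :
    ConnectedOn G (U \ {d}) := by
  obtain ⟨hf, hmin⟩ := hmf
  have hdU := hf.subset hd
  have hcd : c ≠ d := fun h => hf.cut_notMem (h ▸ hd)
  refine connectedOn_of_forall_reachIn (c := c) fun u hu => ?_
  by_cases huD : u ∈ D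
  · by_contra hnot
    set S := componentIn G (U \ {d}) u
    have hclosed : ∀ a ∈ S ∩ D, ∀ b ∈ U \ {d}, G.Adj a b → b ∈ S ∩ D := by
      rintro a ⟨haS, haD⟩ b hb hab
      have hbS := mem_componentIn_of_adj haS hab hb
      have hbc : b ≠ c := by rintro rfl; exact hnot hbS.2
      exact ⟨hbS, hf.mem_of_adj haD hab hb.1 hbc⟩
    have hSD : S ⊆ D := fun t ht =>
      (ht.2.mem_of_closed hclosed ⟨mem_componentIn_self hu, huD⟩).2
    have hfS : IsFragment G U d S :=
      ⟨hdU.1, ⟨u, hu, rfl⟩, c, hf.1, by rintro (h | h); exacts [hcd h, hnot h.2]⟩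
    refine hmin d S hfS (ssubset_of_subset_of_ne hSD ?_)
    rintro rfl
    exact hd.1.2 rfl
  · exact (hf.reachIn_diff subset_rfl (hU u hu.1 c hf.1) huD hf.cut_notMem).mono
      fun s hs => ⟨hs.1, fun h => hs.2 ((show s = d from h) ▸ hd)⟩

theorem cut_notMem_of_isFragment (hmf : IsMinFragment G U c D) (hU : ConnectedOn G U)
    (hf : IsFragment G U c' D') : c' ∉ D :=
  fun h => hf.not_connectedOn (hmf.connectedOn_diff hU h)

theorem connectedOn_insert_diff (hmf : IsMinFragment G U c D) (hU : ConnectedOn G U) {a : V}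
    (ha : a ∈ insert c D) : ConnectedOn G (insert c D \ {a}) := by
  rcases ha with rfl | haD
  · rw [insert_sdiff_self_of_notMem hmf.1.cut_notMem]
    exact hmf.1.connectedOn
  · intro u hu t ht
    have hsub := hmf.1.insert_subset
    have h := hmf.connectedOn_diff hU haD u ⟨hsub hu.1, hu.2⟩ t ⟨hsub ht.1, ht.2⟩
    exact (hmf.1.reachIn_insert sdiff_subset h hu.1 ht.1).mono fun s hs => ⟨hs.2, hs.1.2⟩

end IsMinFragment

theorem connectedOn_diff_of_forall_not_isFragment {U : Set V} {a : V}
    (h : ∀ c D, ¬ IsFragment G U c D) (ha : a ∈ U) : ConnectedOn G (U \ {a}) := by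
  intro u hu t ht
  by_contra hnot
  exact h a _ ⟨ha, ⟨u, hu, rfl⟩, t, ht.1, by rintro (h | h); exacts [ht.2 h, hnot h.2]⟩

theorem exists_isMinFragment_subset [Finite V] {U D : Set V} {c : V}
    (hf : IsFragment G U c D) : ∃ c' D', IsMinFragment G U c' D' ∧ D' ⊆ D := by
  obtain ⟨D', hmin⟩ :=
    (toFinite {D' | (∃ c', IsFragment G U c' D') ∧ D' ⊆ D}).exists_minimal
      ⟨D, ⟨c, hf⟩, subset_rfl⟩
  obtain ⟨⟨c', hf'⟩, hD'⟩ := hmin.prop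
  exact ⟨c', D', ⟨hf', fun c'' D'' hf'' hlt =>
    hmin.not_lt ⟨⟨c'', hf''⟩, hlt.subset.trans hD'⟩ hlt⟩, hD'⟩

theorem exists_disjoint_isMinFragments [Finite V] {U D : Set V} {c : V}
    (hf : IsFragment G U c D) : ∃ c₀ D₀ c₁ D₁, IsMinFragment G U c₀ D₀ ∧
      IsMinFragment G U c₁ D₁ ∧ Disjoint D₀ D₁ := by
  obtain ⟨c₀, D₀, h₀, -⟩ := exists_isMinFragment_subset hf
  obtain ⟨hc₀, ⟨z₀, hz₀, hD₀⟩, z₁, hz₁U, hz₁D₀⟩ := h₀.1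
  have hz₁ : z₁ ∈ U \ {c₀} := ⟨hz₁U, fun h => hz₁D₀ (Or.inl h)⟩
  have hdisj : Disjoint D₀ (componentIn G (U \ {c₀}) z₁) :=
    hD₀ ▸ disjoint_componentIn hz₁ (hD₀ ▸ fun h => hz₁D₀ (Or.inr h))
  have hfK : IsFragment G U c₀ (componentIn G (U \ {c₀}) z₁) := by
    refine ⟨hc₀, ⟨z₁, hz₁, rfl⟩, z₀, hz₀.1, ?_⟩
    rintro (h | h)
    · exact hz₀.2 h
    · exact disjoint_left.mp hdisj (hD₀ ▸ mem_componentIn_self hz₀) h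
  obtain ⟨c₁, D₁, h₁, hD₁⟩ := exists_isMinFragment_subset hfK
  exact ⟨c₀, D₀, c₁, D₁, h₀, h₁, hdisj.mono_right hD₁⟩

theorem connectedOn_diff_pair {U D₀ D₁ : Set V} {c₀ c₁ x y : V}
    (hU : ConnectedOn G U) (h₀ : IsMinFragment G U c₀ D₀) (h₁ : IsMinFragment G U c₁ D₁)
    (hdisj : Disjoint D₀ D₁) (hx : x ∈ D₀) (hy : y ∈ D₁) :
    ConnectedOn G (U \ {x, y}) := by
  have key : ∀ {c₀ c₁ x y : V} {D₀ D₁ : Set V}, IsMinFragment G U c₀ D₀ →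
      IsMinFragment G U c₁ D₁ → x ∈ D₀ → y ∈ D₁ →
      ∀ u ∈ U \ {x, y}, u ∉ D₁ → ReachIn G (U \ {x, y}) u c₀ := by
    intro c₀ c₁ x y D₀ D₁ h₀ h₁ hx hy u hu huD₁
    have hc₀x : c₀ ≠ x := fun h => h₀.1.cut_notMem (h ▸ hx)
    have hux : u ≠ x := fun h => hu.2 (Or.inl h)
    have h := h₀.connectedOn_diff hU hx u ⟨hu.1, hux⟩ c₀ ⟨h₀.1.1, hc₀x⟩
    refine (h₁.1.reachIn_diff sdiff_subset h huD₁
      (h₁.cut_notMem_of_isFragment hU h₀.1)).mono ?_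
    rintro s ⟨⟨hsU, hsx⟩, hsD₁⟩
    exact ⟨hsU, by rintro (rfl | rfl); exacts [hsx rfl, hsD₁ hy]⟩
  have hc₁ : c₁ ∈ U \ {x, y} := ⟨h₁.1.1, by
    rintro (rfl | rfl)
    exacts [h₀.cut_notMem_of_isFragment hU h₁.1 hx, h₁.1.cut_notMem hy]⟩
  refine connectedOn_of_forall_reachIn (c := c₀) fun u hu => ?_
  by_cases huD₁ : u ∈ D₁
  · have hu' : u ∈ U \ {y, x} := pair_comm x y ▸ hu
    have huc₁ := key h₁ h₀ hy hx u hu' (disjoint_right.mp hdisj huD₁)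
    exact (pair_comm y x ▸ huc₁).trans (key h₀ h₁ hx hy c₁ hc₁ h₁.1.cut_notMem)
  · exact key h₀ h₁ hx hy u hu huD₁

def IsLovaszPair (G : SimpleGraph V) (U : Set V) (x y : V) : Prop :=
  x ∈ U ∧ y ∈ U ∧ x ≠ y ∧ ¬ G.Adj x y ∧
    ∀ u ∈ U \ {x, y}, ∃ r, G.Adj r x ∧ G.Adj r y ∧ ReachIn G (U \ {x, y}) u r

section LovaszPair

variable {U : Set V} {k : ℕ} {v w : V}

theorem exists_lovaszPair_of_isFragment_diff [Finite V]
    (hnc : ∀ a ∈ U, ConnectedOn G (U \ {a})) (hw : w ∈ U)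
    (hdeg : 3 ≤ (G.neighborSet w ∩ U).ncard) {c : V} {D : Set V}
    (hf : IsFragment G (U \ {w}) c D) :
    ∃ x y, G.Adj w x ∧ G.Adj w y ∧ IsLovaszPair G U x y := by
  have hU := hnc w hw
  obtain ⟨c₀, D₀, c₁, D₁, h₀, h₁, hdisj⟩ := exists_disjoint_isMinFragments hf
  obtain ⟨x, hx, hwx⟩ := h₀.1.exists_adj hnc hw
  obtain ⟨y, hy, hwy⟩ := h₁.1.exists_adj hnc hw
  have hxU := h₀.1.subset hx
  have hyU := h₁.1.subset hy
  have hxy : x ≠ y := fun h => disjoint_left.mp hdisj hx (h ▸ hy)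
  have hnadj : ¬ G.Adj x y := fun hxy' => disjoint_left.mp hdisj
    (h₀.1.mem_of_adj hx hxy' hyU.1 fun h => h₁.cut_notMem_of_isFragment hU h₀.1 (h ▸ hy)) hy
  have hrest := connectedOn_diff_pair hU h₀ h₁ hdisj hx hy
  obtain ⟨w', ⟨hww', hw'U⟩, hw'xy⟩ : ((G.neighborSet w ∩ U) \ {x, y}).Nonempty :=
    sdiff_nonempty_of_ncard_lt_ncard ((ncard_insert_le x {y}).trans_lt (by simp; omega))
  have hw : w ∈ U \ {x, y} := ⟨hw, by rintro (rfl | rfl); exacts [G.irrefl hwx, G.irrefl hwy]⟩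
  refine ⟨x, y, hwx, hwy, hxU.1.1, hyU.1.1, hxy, hnadj, fun u hu => ⟨w, hwx, hwy, ?_⟩⟩
  by_cases huw : u = w
  · exact huw ▸ ReachIn.refl
  have hsub : (U \ {w}) \ {x, y} ⊆ U \ {x, y} := sdiff_subset_sdiff_left sdiff_subset
  have hw' : w' ∈ (U \ {w}) \ {x, y} := ⟨⟨hw'U, (G.ne_of_adj hww').symm⟩, hw'xy⟩
  exact ((hrest u ⟨⟨hu.1, huw⟩, hu.2⟩ w' hw').mono hsub).tail hww'.symm (hsub hw') hw

theorem exists_lovaszPair_of_not_adj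
    (hnc : ∀ a ∈ U \ {w}, ConnectedOn G ((U \ {w}) \ {a})) (hUv : ConnectedOn G (U \ {v}))
    (hw : w ∈ U) (hwv : w ≠ v) {z : V} (hz : z ∈ U \ {v}) (hzw : z ≠ w)
    (hwz : ¬ G.Adj w z) :
    ∃ a, a ≠ v ∧ IsLovaszPair G U w a := by
  obtain ⟨a, b, hab, haU, hbU, ha, hb⟩ := (hUv z hz w ⟨hw, hwv⟩).exists_adj_boundary
    (X := {t | t = w ∨ G.Adj w t}) (by rintro (h | h); exacts [hzw h, hwz h]) (Or.inl rfl)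
  have hbw : b ≠ w := by rintro rfl; exact ha (Or.inr hab.symm)
  have hwb : G.Adj w b := hb.resolve_left hbw
  have haw : a ≠ w := fun h => ha (Or.inl h)
  have hdiff : (U \ {w}) \ {a} = U \ {w, a} := by rw [sdiff_sdiff, singleton_union]
  refine ⟨a, haU.2, hw, haU.1, haw.symm, fun h => ha (Or.inr h),
    fun u hu => ⟨b, hwb.symm, hab.symm, ?_⟩⟩
  rw [← hdiff] at hu ⊢
  exact hnc a ⟨haU.1, haw⟩ u hu b ⟨⟨hbU.1, hbw⟩, (G.ne_of_adj hab).symm⟩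

theorem eq_of_not_adj_of_not_adj [Finite V] (hU : U.ncard = k + 2) {d a b : V} (hdU : d ∈ U)
    (hd : (G.neighborSet d ∩ U).ncard = k) (ha : a ∈ U \ {d}) (hb : b ∈ U \ {d})
    (hda : ¬ G.Adj d a) (hdb : ¬ G.Adj d b) : a = b := by
  by_contra hab
  have hsub : {d, a, b} ⊆ U := by
    rintro t (rfl | rfl | rfl)
    exacts [hdU, ha.1, hb.1]
  have hcard : ({d, a, b} : Set V).ncard = 3 := by
    rw [ncard_insert_of_notMem (by rintro (h | h); exacts [ha.2 h.symm, hb.2 h.symm]),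
      ncard_pair hab]
  have hN : G.neighborSet d ∩ U ⊆ U \ {d, a, b} := by
    rintro t ⟨hdt, htU⟩
    refine ⟨htU, ?_⟩
    rintro (rfl | rfl | rfl)
    exacts [G.irrefl hdt, hda hdt, hdb hdt]
  have h1 := ncard_le_ncard hN
  have h2 := ncard_le_ncard hsub
  rw [ncard_sdiff hsub, hcard, hU, hd] at h1
  rw [hcard, hU] at h2
  omega

theorem exists_lovaszPair_of_dominating [Finite V] (hconn : ConnectedOn G U) (hv : v ∈ U)
    (hw : w ∈ U) (hwv : w ≠ v) (hvw : ¬ G.Adj v w)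
    (hdom : ∀ t ∈ U, t = w ∨ t = v ∨ G.Adj w t)
    (hdeg : ∀ u ∈ U, u ≠ v → (G.neighborSet u ∩ U).ncard = k) :
    ∃ x y, x ≠ v ∧ y ≠ v ∧ IsLovaszPair G U x y := by
  have hUeq : U = insert w (insert v (G.neighborSet w ∩ U)) := by
    ext t
    constructor
    · intro ht
      rcases hdom t ht with rfl | rfl | h
      exacts [mem_insert _ _, mem_insert_of_mem _ (mem_insert _ _),
        mem_insert_of_mem _ (mem_insert_of_mem _ ⟨h, ht⟩)]
    · rintro (rfl | rfl | h)
      exacts [hw, hv, h.2]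
  have hUcard : U.ncard = k + 2 := by
    rw [hUeq, ncard_insert_of_notMem, ncard_insert_of_notMem, hdeg w hw hwv]
    · exact fun h => hvw h.1.symm
    · rintro (h | h)
      exacts [hwv h, G.irrefl h.1]
  have hnonadj : ∀ d ∈ U, d ≠ v → ∃ m ∈ U \ {d}, ¬ G.Adj d m := by
    intro d hd hdv
    obtain ⟨m, hm, hmN⟩ := exists_mem_notMem_of_ncard_lt_ncard
      (s := G.neighborSet d ∩ U) (t := U \ {d})
      (by rw [ncard_sdiff_singleton_of_mem hd, hdeg d hd hdv, hUcard]; omega)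
    exact ⟨m, hm, fun h => hmN ⟨h, hm.1⟩⟩
  obtain ⟨d₀, hd₀U, hvd₀⟩ := (hconn v hv w hw).exists_adj_of_ne hwv.symm
  have hd₀v : d₀ ≠ v := (G.ne_of_adj hvd₀).symm
  have hwd₀ : G.Adj w d₀ := by
    rcases hdom d₀ hd₀U with rfl | h | h
    exacts [absurd hvd₀ hvw, absurd h hd₀v, h]
  obtain ⟨μ, hμ, hd₀μ⟩ := hnonadj d₀ hd₀U hd₀v
  have hμv : μ ≠ v := by rintro rfl; exact hd₀μ hvd₀.symm
  have hwμ : G.Adj w μ := by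
    rcases hdom μ hμ.1 with rfl | h | h
    exacts [absurd hwd₀.symm hd₀μ, absurd h hμv, h]
  -- `U` has `k + 2` vertices, so `d₀` and `μ` are each other's only non-neighbours
  have hvμ : G.Adj v μ := by
    by_contra hvμ
    exact hd₀v (eq_of_not_adj_of_not_adj hUcard hμ.1 (hdeg μ hμ.1 hμv)
      ⟨hd₀U, fun h => hμ.2 h.symm⟩ ⟨hv, hμv.symm⟩ (fun h => hd₀μ h.symm)
      (fun h => hvμ h.symm))
  refine ⟨d₀, μ, hd₀v, hμv, hd₀U, hμ.1, fun h => hμ.2 h.symm, hd₀μ, fun u hu => ?_⟩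
  have hw' : w ∈ U \ {d₀, μ} :=
    ⟨hw, by rintro (rfl | rfl); exacts [G.irrefl hwd₀, G.irrefl hwμ]⟩
  rcases hdom u hu.1 with rfl | rfl | hwu
  · exact ⟨u, hwd₀, hwμ, ReachIn.refl⟩
  · exact ⟨u, hvd₀, hvμ, ReachIn.refl⟩
  · exact ⟨w, hwd₀, hwμ, ReachIn.single hwu.symm hu hw'⟩

/-- Either `U - w` has a cut vertex, and `w` has neighbours in two disjoint minimal fragments
of `U - w`; or some vertex `z ≠ v` is at distance two from `w`, and a path from `z` to `w`
avoiding `v` gives a pair `w, a` at distance two with `U - w - a` connected; or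
`U = N[w] ∪ {v}`, which is so dense that counting non-neighbours gives the pair. -/
theorem exists_lovaszPair_of_forall_connectedOn_diff [Finite V] (hk : 3 ≤ k)
    (hconn : ConnectedOn G U) (hnc : ∀ a ∈ U, ConnectedOn G (U \ {a})) (hv : v ∈ U)
    (hdeg : ∀ u ∈ U, u ≠ v → (G.neighborSet u ∩ U).ncard = k) (hw : w ∈ U) (hwv : w ≠ v)
    (hvw : ¬ G.Adj v w) : ∃ x y, x ≠ v ∧ y ≠ v ∧ IsLovaszPair G U x y := by
  by_cases hfrag : ∃ c D, IsFragment G (U \ {w}) c D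
  · obtain ⟨c, D, hf⟩ := hfrag
    obtain ⟨x, y, hwx, hwy, hp⟩ :=
      exists_lovaszPair_of_isFragment_diff hnc hw (hdeg w hw hwv ▸ hk) hf
    exact ⟨x, y, by rintro rfl; exact hvw hwx.symm, by rintro rfl; exact hvw hwy.symm, hp⟩
  push Not at hfrag
  have hnc' := fun a (ha : a ∈ U \ {w}) => connectedOn_diff_of_forall_not_isFragment hfrag ha
  by_cases hfar : ∃ z ∈ U \ {v}, z ≠ w ∧ ¬ G.Adj w z
  · obtain ⟨z, hz, hzw, hwz⟩ := hfar
    obtain ⟨a, hav, hp⟩ := exists_lovaszPair_of_not_adj hnc' (hnc v hv) hw hwv hz hzw hwz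
    exact ⟨w, a, hwv, hav, hp⟩
  · refine exists_lovaszPair_of_dominating hconn hv hw hwv hvw (fun t ht => ?_) hdeg
    by_contra! h
    exact hfar ⟨t, ⟨ht, h.2.1⟩, h.1, h.2.2⟩

theorem IsLovaszPair.of_isFragment (hU : ConnectedOn G U) {c : V} {D : Set V}
    (hf : IsFragment G U c D) {x y : V} (hp : IsLovaszPair G (insert c D) x y) (hx : x ∈ D)
    (hy : y ∈ D) : IsLovaszPair G U x y := by
  obtain ⟨-, -, hxy, hnadj, hroot⟩ := hp
  have hsub : insert c D \ {x, y} ⊆ U \ {x, y} := sdiff_subset_sdiff_left hf.insert_subset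
  refine ⟨(hf.subset hx).1, (hf.subset hy).1, hxy, hnadj, fun u hu => ?_⟩
  by_cases huD : u ∈ insert c D
  · obtain ⟨r, hrx, hry, hr⟩ := hroot u ⟨huD, hu.2⟩
    exact ⟨r, hrx, hry, hr.mono hsub⟩
  have hc : c ∈ insert c D \ {x, y} :=
    ⟨mem_insert c D, by rintro (rfl | rfl); exacts [hf.cut_notMem hx, hf.cut_notMem hy]⟩
  obtain ⟨r, hrx, hry, hr⟩ := hroot c hc
  have huc := hf.reachIn_diff subset_rfl (hU u hu.1 c hf.1)
    (fun h => huD (mem_insert_of_mem c h)) hf.cut_notMem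
  refine ⟨r, hrx, hry, (huc.mono ?_).trans (hr.mono hsub)⟩
  rintro s ⟨hsU, hsD⟩
  exact ⟨hsU, by rintro (rfl | rfl); exacts [hsD hx, hsD hy]⟩

/-- A minimal fragment together with its cut vertex is a leaf block: it has no cut vertex,
and only the cut vertex has neighbours outside it. -/
theorem exists_lovaszPair_of_isMinFragment [Finite V] (hk : 3 ≤ k)
    (hconn : ConnectedOn G univ) (hreg : ∀ u, (G.neighborSet u).ncard = k) {D : Set V}
    (hmf : IsMinFragment G univ v D) : ∃ x y, IsLovaszPair G univ x y := by
  have hf := hmf.1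
  have hN : ∀ d ∈ D, G.neighborSet d ⊆ insert v D := fun d hd b hdb =>
    mem_insert_iff.mpr (hf.mem_or_eq_of_adj hd hdb trivial).symm
  have hdeg : ∀ u ∈ insert v D, u ≠ v → (G.neighborSet u ∩ insert v D).ncard = k :=
    fun u hu huv => by rw [inter_eq_left.mpr (hN u (hu.resolve_left huv))]; exact hreg u
  obtain ⟨b, hb, hvb⟩ := hf.exists_adj_cut hconn
  have hDcard : k ≤ D.ncard := by
    obtain ⟨d, hd⟩ := hf.nonempty
    have h := ncard_le_ncard (s := G.neighborSet d) (t := insert v D \ {d})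
      fun t ht => ⟨hN d hd ht, (G.ne_of_adj ht).symm⟩
    rwa [hreg, ncard_sdiff_singleton_of_mem (mem_insert_of_mem _ hd),
      ncard_insert_of_notMem hf.cut_notMem, Nat.add_sub_cancel] at h
  obtain ⟨w, hwD, hvw⟩ : ∃ w ∈ D, ¬ G.Adj v w := by
    by_contra! h
    have h' := ncard_le_ncard (s := D) (t := G.neighborSet v \ {b})
      fun d hd => ⟨h d hd, fun hdb => hb.2 ((show d = b from hdb) ▸ mem_insert_of_mem _ hd)⟩
    rw [ncard_sdiff_singleton_of_mem (show b ∈ G.neighborSet v from hvb), hreg] at h'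
    omega
  obtain ⟨x, y, hxv, hyv, hp⟩ := exists_lovaszPair_of_forall_connectedOn_diff hk
    (hf.connectedOn_insert hconn) (fun a ha => hmf.connectedOn_insert_diff hconn ha)
    (mem_insert v D) hdeg (mem_insert_of_mem v hwD) (fun h => hf.cut_notMem (h ▸ hwD)) hvw
  exact ⟨x, y, hp.of_isFragment hconn hf (hp.1.resolve_left hxv) (hp.2.1.resolve_left hyv)⟩

theorem exists_lovaszPair [Finite V] (hk : 3 ≤ k) (hconn : ConnectedOn G univ)
    (hreg : ∀ u, (G.neighborSet u).ncard = k) {a b : V} (hab : a ≠ b) (hnadj : ¬ G.Adj a b) :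
    ∃ x y, IsLovaszPair G univ x y := by
  by_cases hfrag : ∃ c D, IsFragment G univ c D
  · obtain ⟨c, D, hf⟩ := hfrag
    obtain ⟨v, D', hmf, -⟩ := exists_isMinFragment_subset hf
    exact exists_lovaszPair_of_isMinFragment hk hconn hreg hmf
  push Not at hfrag
  obtain ⟨x, y, -, -, hp⟩ := exists_lovaszPair_of_forall_connectedOn_diff hk hconn
    (fun _ => connectedOn_diff_of_forall_not_isFragment hfrag) (mem_univ a)
    (fun u _ _ => by rw [inter_univ]; exact hreg u) (mem_univ b) hab.symm hnadj
  exact ⟨x, y, hp⟩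

end LovaszPair

theorem Indep.insert {A : Set V} {v : V} (hA : Indep G A) (hv : ∀ a ∈ A, ¬ G.Adj v a) :
    Indep G (insert v A) := by
  rintro a (rfl | ha) b (rfl | hb) hab
  · exact G.irrefl hab
  · exact hv b hb hab
  · exact hv a ha hab.symm
  · exact hA a ha b hb hab

section Greedy

variable [Finite V] {A A₀ B S : Set V} {d : ℕ} {v : V}

theorem DegenerateOn.insert (hB : DegenerateOn G B d) (hv : (B ∩ G.neighborSet v).ncard ≤ d) :
    DegenerateOn G (insert v B) d := by
  intro s hs hsfin hsne
  by_cases hvs : v ∈ s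
  · refine ⟨v, hvs, le_trans (ncard_le_ncard (t := B ∩ G.neighborSet v) ?_) hv⟩
    rintro u ⟨hus, hvu⟩
    exact ⟨(hs hus).resolve_left (G.ne_of_adj hvu).symm, hvu⟩
  · exact hB s (fun u hu => (hs hu).resolve_left (by rintro rfl; exact hvs hu)) hsfin hsne

/-- One greedy step: `v` joins `A` unless it has a neighbour in `A ∪ A₀`, in which case it
joins `B`, where that neighbour saves one from the bound `d + 1`. -/
theorem exists_partition_insert (hAB : Disjoint A B) (hA : Indep G (A ∪ A₀))
    (hB : DegenerateOn G B d) (hvAB : v ∉ A ∪ B)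
    (hle : (G.neighborSet v ∩ (A ∪ B)).ncard ≤ d + 1)
    (hA₀ : (G.neighborSet v ∩ A₀).Nonempty → (G.neighborSet v ∩ (A ∪ B)).ncard ≤ d) :
    ∃ A' B', A' ∪ B' = insert v (A ∪ B) ∧ Disjoint A' B' ∧ Indep G (A' ∪ A₀) ∧
      DegenerateOn G B' d := by
  by_cases hnbr : (G.neighborSet v ∩ (A ∪ A₀)).Nonempty
  · refine ⟨A, insert v B, union_insert,
      disjoint_insert_right.mpr ⟨fun h => hvAB (Or.inl h), hAB⟩, hA, hB.insert ?_⟩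
    have hsub : B ∩ G.neighborSet v ⊆ G.neighborSet v ∩ (A ∪ B) :=
      fun u hu => ⟨hu.2, Or.inr hu.1⟩
    obtain ⟨a, hva, ha | ha⟩ := hnbr
    · have hsub' : B ∩ G.neighborSet v ⊆ (G.neighborSet v ∩ (A ∪ B)) \ {a} :=
        fun u hu => ⟨hsub hu, fun h => disjoint_left.mp hAB ((show u = a from h) ▸ ha) hu.1⟩
      have h := ncard_le_ncard hsub'
      rw [ncard_sdiff_singleton_of_mem
        (show a ∈ G.neighborSet v ∩ (A ∪ B) from ⟨hva, Or.inl ha⟩)] at h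
      omega
    · exact (ncard_le_ncard hsub).trans (hA₀ ⟨a, hva, ha⟩)
  · refine ⟨insert v A, B, insert_union,
      disjoint_insert_left.mpr ⟨fun h => hvAB (Or.inr h), hAB⟩, ?_, hB⟩
    rw [insert_union]
    exact hA.insert fun a ha hva => hnbr ⟨a, hva, ha⟩

/-- The greedy partition of `S`, processing vertices in decreasing order of `ρ`. -/
theorem exists_partition_of_rank (ρ : V → ℕ) (hA₀ : Indep G A₀)
    (hρ : ∀ v ∈ S, (G.neighborSet v ∩ {u ∈ S | ρ v ≤ ρ u}).ncard ≤ d + 1 ∧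
      ((G.neighborSet v ∩ A₀).Nonempty →
        (G.neighborSet v ∩ {u ∈ S | ρ v ≤ ρ u}).ncard ≤ d)) :
    ∃ A B, A ∪ B = S ∧ Disjoint A B ∧ Indep G (A ∪ A₀) ∧ DegenerateOn G B d := by
  suffices ∀ n, ∀ T ⊆ S, T.ncard = n →
      (∀ v ∈ T, ∀ w ∈ S, ρ v < ρ w → w ∈ T) → ∃ A B, A ∪ B = T ∧ Disjoint A B ∧ Indep G (A ∪ A₀) ∧ DegenerateOn G B d from
    this _ S subset_rfl rfl fun _ _ _ hw _ => hw
  intro n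
  induction n with
  | zero =>
    intro T _ hT _
    rw [(ncard_eq_zero (toFinite T)).mp hT]
    exact ⟨∅, ∅, union_empty _, disjoint_empty _, by rwa [empty_union],
      fun s hs _ ⟨x, hx⟩ => absurd (hs hx) (notMem_empty x)⟩
  | succ n ih =>
    intro T hTS hT hup
    obtain ⟨v, hvT, hvmin⟩ := exists_min_image T ρ (toFinite T)
      (nonempty_of_ncard_ne_zero (by omega))
    obtain ⟨A, B, hAB, hdisj, hA, hB⟩ := ih (T \ {v}) (sdiff_subset.trans hTS)
      (by rw [ncard_sdiff_singleton_of_mem hvT, hT]; rfl)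
      fun u hu w hw hlt => ⟨hup u hu.1 w hw hlt, by
        rintro rfl
        exact absurd (hvmin u hu.1) (not_le.mpr hlt)⟩
    have hsub :
        G.neighborSet v ∩ (A ∪ B) ⊆ G.neighborSet v ∩ {u ∈ S | ρ v ≤ ρ u} := by
      rw [hAB]
      exact fun u hu => ⟨hu.1, hTS hu.2.1, hvmin u hu.2.1⟩
    obtain ⟨A', B', h⟩ := exists_partition_insert hdisj hA hB (hAB ▸ fun h => h.2 rfl)
      ((ncard_le_ncard hsub).trans (hρ v (hTS hvT)).1)
      fun h => (ncard_le_ncard hsub).trans ((hρ v (hTS hvT)).2 h)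
    rw [hAB, insert_sdiff_singleton, insert_eq_of_mem hvT] at h
    exact ⟨A', B', h⟩

end Greedy

def reachLevel (G : SimpleGraph V) (S R : Set V) : ℕ → Set V
  | 0 => R
  | n + 1 => reachLevel G S R n ∪ {v ∈ S | ∃ u ∈ reachLevel G S R n, G.Adj v u}

theorem exists_rank_of_reachIn {S R : Set V} (hRS : R ⊆ S)
    (hreach : ∀ v ∈ S, ∃ r ∈ R, ReachIn G S v r) :
    ∃ ρ : V → ℕ, ∀ v ∈ S \ R, ∃ u ∈ S, G.Adj v u ∧ ρ u < ρ v := by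
  have hsub : ∀ n, reachLevel G S R n ⊆ S := by
    intro n
    induction n with
    | zero => exact hRS
    | succ n ih => exact union_subset ih fun _ h => h.1
  have hmem : ∀ v ∈ S, {n | v ∈ reachLevel G S R n}.Nonempty := by
    intro v hv
    obtain ⟨r, hr, hvr⟩ := hreach v hv
    clear hv
    induction hvr using Relation.ReflTransGen.head_induction_on with
    | refl => exact ⟨0, hr⟩
    | head hstep _ ih =>
      obtain ⟨n, hn⟩ := ih
      exact ⟨n + 1, Or.inr ⟨hstep.2.1, _, hn, hstep.1⟩⟩
  refine ⟨fun v => sInf {n | v ∈ reachLevel G S R n}, ?_⟩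
  rintro v ⟨hvS, hvR⟩
  have hv := Nat.sInf_mem (hmem v hvS)
  obtain ⟨p, hp⟩ : ∃ p, sInf {n | v ∈ reachLevel G S R n} = p + 1 :=
    Nat.exists_eq_succ_of_ne_zero fun h0 => hvR (by rw [h0] at hv; exact hv)
  rw [hp] at hv
  rcases hv with hold | ⟨-, u, hu, hvu⟩
  · have := Nat.sInf_le (show p ∈ {n | v ∈ reachLevel G S R n} from hold)
    omega
  · have hup := Nat.sInf_le (show p ∈ {n | u ∈ reachLevel G S R n} from hu)
    refine ⟨u, hsub p hu, hvu, hup.trans_lt ?_⟩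
    beta_reduce
    omega

section Decomposition

variable [Finite V] {k : ℕ}

/-- Greedy placement along a ranking towards the roots `R`, after putting `A₀` into `A`. -/
theorem kDegenDecomp_of_roots {A₀ R : Set V} (hdeg : ∀ v, (G.neighborSet v).ncard ≤ k)
    (hA₀ : Indep G A₀) (hRA₀ : R ⊆ A₀ᶜ)
    (hreach : ∀ v ∈ A₀ᶜ, ∃ r ∈ R, ReachIn G A₀ᶜ v r)
    (hR : ∀ r ∈ R, (G.neighborSet r \ A₀).ncard ≤ k - 2 + 1 ∧
      ((G.neighborSet r ∩ A₀).Nonempty → (G.neighborSet r \ A₀).ncard ≤ k - 2)) :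
    KDegenDecomp G k := by
  obtain ⟨ρ, hρ⟩ := exists_rank_of_reachIn hRA₀ hreach
  obtain ⟨A, B, hAB, hdisj, hA, hB⟩ :=
    exists_partition_of_rank (S := A₀ᶜ) (d := k - 2) ρ hA₀ fun v hv => by
      by_cases hvR : v ∈ R
      · have hL : G.neighborSet v ∩ {u ∈ A₀ᶜ | ρ v ≤ ρ u} ⊆ G.neighborSet v \ A₀ :=
          fun u hu => ⟨hu.1, hu.2.1⟩
        exact ⟨(ncard_le_ncard hL).trans (hR v hvR).1,
          fun h => (ncard_le_ncard hL).trans ((hR v hvR).2 h)⟩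
      obtain ⟨u, hu, hvu, hlt⟩ := hρ v ⟨hv, hvR⟩
      have hdv := hdeg v
      refine ⟨?_, fun ⟨a, hva, ha⟩ => ?_⟩
      · have h := ncard_le_ncard (s := G.neighborSet v ∩ {u ∈ A₀ᶜ | ρ v ≤ ρ u})
          (t := G.neighborSet v \ {u}) fun w hw => ⟨hw.1, by
            rintro rfl
            exact absurd hw.2.2 (not_le.mpr hlt)⟩
        rw [ncard_sdiff_singleton_of_mem (show u ∈ G.neighborSet v from hvu)] at h
        omega
      · have h := ncard_le_ncard (s := G.neighborSet v ∩ {u ∈ A₀ᶜ | ρ v ≤ ρ u})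
          (t := G.neighborSet v \ {u, a}) fun w hw => ⟨hw.1, by
            rintro (rfl | rfl)
            exacts [absurd hw.2.2 (not_le.mpr hlt), hw.2.1 ha]⟩
        rw [ncard_sdiff (pair_subset (show u ∈ G.neighborSet v from hvu) hva),
          ncard_pair fun h : u = a => hu (h ▸ ha)] at h
        omega
  refine ⟨A ∪ A₀, B, by rw [union_right_comm, hAB, compl_union_self], ?_, hA, hB⟩
  exact disjoint_union_left.mpr
    ⟨hdisj, disjoint_compl_right.mono_right (hAB ▸ subset_union_right)⟩

theorem kDegenDecomp_of_ncard_lt (hconn : G.Connected) (hdeg : ∀ v, (G.neighborSet v).ncard ≤ k)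
    {r : V} (hr : (G.neighborSet r).ncard < k) : KDegenDecomp G k := by
  refine kDegenDecomp_of_roots (A₀ := ∅) (R := {r}) hdeg (fun _ h => absurd h (notMem_empty _))
    (by simp) (fun v _ => ⟨r, rfl, (ReachIn.of_reachable (hconn.preconnected v r)).mono ?_⟩)
    fun r' hr' => ?_
  · simp
  · rw [mem_singleton_iff.mp hr', sdiff_empty, inter_empty]
    exact ⟨by omega, fun h => absurd h not_nonempty_empty⟩

theorem IsLovaszPair.kDegenDecomp {x y : V} (hdeg : ∀ v, (G.neighborSet v).ncard ≤ k)
    (hp : IsLovaszPair G univ x y) : KDegenDecomp G k := by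
  obtain ⟨-, -, hxy, hnadj, hroot⟩ := hp
  refine kDegenDecomp_of_roots (A₀ := {x, y}) (R := {r | G.Adj r x ∧ G.Adj r y}) hdeg ?_ ?_
    (fun v hv => ?_) fun r hr => ?_
  · rintro a (rfl | rfl) b (rfl | rfl) hab
    exacts [G.irrefl hab, hnadj hab, hnadj hab.symm, G.irrefl hab]
  · rintro r ⟨hrx, hry⟩ (rfl | rfl)
    exacts [G.irrefl hrx, G.irrefl hry]
  · obtain ⟨r, hrx, hry, hr⟩ := hroot v ⟨mem_univ v, hv⟩
    exact ⟨r, ⟨hrx, hry⟩, hr.mono fun s hs => hs.2⟩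
  · have h : (G.neighborSet r \ {x, y}).ncard ≤ k - 2 := by
      rw [ncard_sdiff (pair_subset (show x ∈ G.neighborSet r from hr.1) hr.2), ncard_pair hxy]
      have := hdeg r
      omega
    exact ⟨by omega, fun _ => h⟩

end Decomposition

theorem exists_ne_not_adj [Fintype V] [Nonempty V] {k : ℕ}
    (hreg : ∀ v, (G.neighborSet v).ncard = k)
    (hK : ¬ Nonempty (G ≃g (⊤ : SimpleGraph (Fin (k + 1))))) :
    ∃ a b, a ≠ b ∧ ¬ G.Adj a b := by
  by_contra! h
  have hG : G = ⊤ := by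
    ext a b
    exact ⟨G.ne_of_adj, h a b⟩
  obtain ⟨v⟩ := ‹Nonempty V›
  have hcard : Fintype.card V = k + 1 := by
    have hv := hreg v
    rw [hG, neighborSet_top, ncard_compl, ncard_singleton, Nat.card_eq_fintype_card] at hv
    have := Fintype.card_pos (α := V)
    omega
  rw [hG] at hK
  exact hK ⟨Iso.completeGraph (Fintype.equivFinOfCardEq hcard)⟩

end Development

/-- For every `k ≥ 3`, every connected graph of maximum degree at most `k` that is not
isomorphic to `K_{k+1}` has a partition into an independent set `A` and a set `B`
inducing a `(k-2)`-degenerate graph. -/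
theorem stmt1 {V : Type*} [Fintype V] (k : ℕ) (hk : 3 ≤ k) (G : SimpleGraph V)
    (hconn : G.Connected)
    (hdeg : ∀ v : V, (G.neighborSet v).ncard ≤ k)
    (hK : ¬ Nonempty (G ≃g (⊤ : SimpleGraph (Fin (k + 1))))) :
    KDegenDecomp G k := by
  by_cases hlow : ∃ r, (G.neighborSet r).ncard < k
  · obtain ⟨r, hr⟩ := hlow
    exact kDegenDecomp_of_ncard_lt hconn hdeg hr
  push Not at hlow
  have hreg : ∀ v, (G.neighborSet v).ncard = k := fun v => (hdeg v).antisymm (hlow v)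
  have := hconn.nonempty
  obtain ⟨a, b, hab, hnadj⟩ := exists_ne_not_adj hreg hK
  obtain ⟨x, y, hp⟩ := exists_lovaszPair hk (connectedOn_univ hconn) hreg hab hnadj
  exact hp.kDegenDecomp hdeg
end

section
/- Let k ≥ 2 and let G be a (k-1)-degenerate graph. Then V(G) can be partitioned into sets A and B such that A is a maximal independent set and the subgraph induced by B is (k-2)-degenerate. Moreover, given any (k-1)-degenerate vertex ordering of G, the greedy assignment (placing each vertex in A unless it has an earlier neighbour in A, otherwise in B) produces such a partition in which the induced ordering on B is a (k-2)-degenerate order of G[B]. -/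
open SimpleGraph Set

/-!
Process the vertices in order and put a vertex into `A` unless an earlier neighbour is
already there. Then `A` is independent and dominating, and every vertex `v ∉ A` has an
earlier neighbour in `A`, so at most `(k - 1) - 1` of its earlier neighbours lie outside `A`:
the order restricted to `Aᶜ` is `(k - 2)`-degenerate. In any finite subset of `Aᶜ`, the
largest vertex has all its neighbours in the subset among its earlier ones.
-/

section Greedy

variable {V : Type*} [LinearOrder V] [WellFoundedLT V] (G : SimpleGraph V)

noncomputable def greedyIndep : Set V :=
  {v | wellFounded_lt.fix (fun v ih => ∀ u, (h : u < v) → G.Adj u v → ¬ ih u h) v}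

theorem mem_greedyIndep_iff (v : V) :
    v ∈ greedyIndep G ↔ ∀ u, u < v → G.Adj u v → u ∉ greedyIndep G := by
  rw [greedyIndep, mem_ofPred_eq, WellFounded.fix_eq]
  rfl

theorem indep_greedyIndep : Indep G (greedyIndep G) := by
  intro u hu v hv hadj
  rcases lt_trichotomy u v with h | rfl | h
  · exact (mem_greedyIndep_iff G v).mp hv u h hadj hu
  · exact G.loopless.irrefl u hadj
  · exact (mem_greedyIndep_iff G u).mp hu v h hadj.symm hv

theorem exists_lt_adj_mem_greedyIndep {v : V} (hv : v ∉ greedyIndep G) :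
    ∃ u ∈ greedyIndep G, u < v ∧ G.Adj u v := by
  contrapose! hv
  exact (mem_greedyIndep_iff G v).mpr fun u hu hadj huA => hv u huA hu hadj

theorem ncard_lt_adj_not_mem_greedyIndep_le [Finite V] {v : V} (hv : v ∉ greedyIndep G) :
    {u | u ∉ greedyIndep G ∧ u < v ∧ G.Adj u v}.ncard ≤
      {u | u < v ∧ G.Adj u v}.ncard - 1 := by
  obtain ⟨w, hwA, hwv, hadj⟩ := exists_lt_adj_mem_greedyIndep G hv
  have hsub : {u | u ∉ greedyIndep G ∧ u < v ∧ G.Adj u v} ⊆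
      {u | u < v ∧ G.Adj u v} \ {w} := by
    rintro u ⟨huA, hu⟩
    exact ⟨hu, by rintro rfl; exact huA hwA⟩
  calc _ ≤ ({u | u < v ∧ G.Adj u v} \ {w}).ncard := ncard_le_ncard hsub (toFinite _)
    _ = _ := ncard_sdiff_singleton_of_mem ⟨hwv, hadj⟩

end Greedy

theorem degenerateOn_of_ncard_lt_adj_le {V : Type*} [LinearOrder V] [Finite V]
    (G : SimpleGraph V) (B : Set V) (d : ℕ)
    (h : ∀ v ∈ B, {u | u ∈ B ∧ u < v ∧ G.Adj u v}.ncard ≤ d) : DegenerateOn G B d := by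
  intro s hsB hfin hne
  obtain ⟨v, hvs, hvmax⟩ := hfin.exists_maximalFor id s hne
  refine ⟨v, hvs, le_trans (ncard_le_ncard ?_ (toFinite _)) (h v (hsB hvs))⟩
  rintro u ⟨hus, hadj⟩
  have huv : u ≤ v := le_of_not_gt fun hvu => hvu.not_ge (hvmax hus hvu.le)
  exact ⟨hsB hus, huv.lt_of_ne (G.ne_of_adj hadj.symm), hadj.symm⟩

theorem stmt2_general {V : Type*} [Fintype V] [LinearOrder V] (k : ℕ)
    (G : SimpleGraph V)
    (hord : ∀ v : V, ({u : V | u < v ∧ G.Adj u v}).ncard ≤ k - 1) :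
    ∃ A : Set V,
      (∀ v : V, v ∈ A ↔ ∀ u : V, u < v → G.Adj u v → u ∉ A) ∧
      Indep G A ∧
      (∀ v ∉ A, ∃ u ∈ A, G.Adj u v) ∧
      DegenerateOn G Aᶜ (k - 2) ∧
      (∀ v ∉ A, ({u : V | u ∉ A ∧ u < v ∧ G.Adj u v}).ncard ≤ k - 2) := by
  have hB : ∀ v ∉ greedyIndep G,
      {u | u ∉ greedyIndep G ∧ u < v ∧ G.Adj u v}.ncard ≤ k - 2 := fun v hv =>
    (ncard_lt_adj_not_mem_greedyIndep_le G hv).trans (by have := hord v; omega)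
  refine ⟨greedyIndep G, mem_greedyIndep_iff G, indep_greedyIndep G, fun v hv => ?_,
    degenerateOn_of_ncard_lt_adj_le G _ _ hB, hB⟩
  obtain ⟨u, huA, -, hadj⟩ := exists_lt_adj_mem_greedyIndep G hv
  exact ⟨u, huA, hadj⟩

/-- Given a `(k-1)`-degenerate ordering of `G` (a linear order where every vertex has at
most `k-1` earlier neighbours), there is a partition into a set `A` (obtained greedily:
a vertex is in `A` iff it has no earlier neighbour in `A`) and `B = Aᶜ` such that
`A` is a maximal independent set, `G[B]` is `(k-2)`-degenerate, and the induced
ordering on `B` is a `(k-2)`-degenerate order. -/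
theorem stmt2 {V : Type*} [Fintype V] [LinearOrder V] (k : ℕ) (hk : 2 ≤ k)
    (G : SimpleGraph V)
    (hord : ∀ v : V, ({u : V | u < v ∧ G.Adj u v}).ncard ≤ k - 1) :
    ∃ A : Set V,
      (∀ v : V, v ∈ A ↔ ∀ u : V, u < v → G.Adj u v → u ∉ A) ∧
      Indep G A ∧
      (∀ v ∉ A, ∃ u ∈ A, G.Adj u v) ∧
      DegenerateOn G Aᶜ (k - 2) ∧
      (∀ v ∉ A, ({u : V | u ∉ A ∧ u < v ∧ G.Adj u v}).ncard ≤ k - 2) :=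
  stmt2_general k G hord
end

section
/- Let k ≥ 3 and let G be a connected k-regular graph containing two non-adjacent vertices u and v such that u and v have a common neighbour in every connected component of G minus {u,v}. Then G has a k-degenerate decomposition, i.e., V(G) can be partitioned into an independent set A and a set B inducing a (k-2)-degenerate graph. -/
/-!
Let `f w` be the distance in `G - {u,v}` from `w` to the common neighbours of `u` and `v`, and
pick an independent set `A ∋ u, v` maximising `∑ a ∈ A, (f a + 1)`. If `G - A` were not
`(k-2)`-degenerate, some nonempty `s` disjoint from `A` would have every vertex with at least
`k - 1` neighbours inside `s`, hence at most one outside. So an `f`-minimal `w ∈ s` is no common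
neighbour of `u, v ∈ A`, and it has a neighbour `z` with `f z < f w`; by minimality `z ∉ s`,
so `z` is the only neighbour of `w` outside `s`. Thus
`insert w (A.erase z)` is independent, and it is strictly heavier whether or not `z ∈ A`.
-/

open SimpleGraph Set

theorem SimpleGraph.exists_descent_to {W : Type*} (H : SimpleGraph W) (T : Set W)
    (h : ∀ w, ∃ x ∈ T, H.Reachable w x) :
    ∃ f : W → ℕ, ∀ w, w ∈ T ∨ ∃ z, H.Adj w z ∧ f z < f w := by
  classical
  have hwalk : ∀ w, ∃ n, ∃ x ∈ T, ∃ p : H.Walk w x, p.length = n := fun w ↦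
    let ⟨x, hx, ⟨p⟩⟩ := h w
    ⟨p.length, x, hx, p, rfl⟩
  refine ⟨fun w ↦ Nat.find (hwalk w), fun w ↦ ?_⟩
  obtain ⟨x, hx, p, hp⟩ := Nat.find_spec (hwalk w)
  cases p with
  | nil => exact Or.inl hx
  | cons hadj q =>
    refine Or.inr ⟨_, hadj, show Nat.find _ < Nat.find _ from ?_⟩
    have := Nat.find_min' (hwalk _) ⟨x, hx, q, rfl⟩
    simp only [Walk.length_cons] at hp
    omega

section

variable {V : Type*} {G : SimpleGraph V} {u v : V}

theorem indep_pair (h : ¬ G.Adj u v) : Indep G {u, v} := by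
  rintro a (rfl | rfl) b (rfl | rfl) hab
  exacts [G.irrefl hab, h hab, h hab.symm, G.irrefl hab]

theorem indep_insert_erase {A : Set V} (hA : Indep G A) {w z : V}
    (hwz : ∀ a ∈ A, G.Adj w a → a = z) : Indep G (insert w (A \ {z})) := by
  have hw : ∀ a ∈ A \ {z}, ¬ G.Adj w a := fun a ha hwa ↦ ha.2 (hwz a ha.1 hwa)
  rintro a (rfl | ha) b (rfl | hb) hab
  exacts [G.irrefl hab, hw b hb hab, hw a ha hab.symm, hA a ha.1 b hb.1 hab]

theorem exists_potential_of_common_neighbour_reachable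
    (hstrong : ∀ w : ({u, v}ᶜ : Set V), ∃ x : ({u, v}ᶜ : Set V),
      (G.induce ({u, v}ᶜ : Set V)).Reachable w x ∧ G.Adj u (x : V) ∧ G.Adj v (x : V)) :
    ∃ f : V → ℕ, ∀ w, w ≠ u → w ≠ v →
      (G.Adj u w ∧ G.Adj v w) ∨ ∃ z, z ≠ u ∧ z ≠ v ∧ G.Adj w z ∧ f z < f w := by
  classical
  obtain ⟨g, hg⟩ := (G.induce ({u, v}ᶜ : Set V)).exists_descent_to
    {x | G.Adj u x ∧ G.Adj v x} fun w ↦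
      let ⟨x, hwx, hux, hvx⟩ := hstrong w
      ⟨x, ⟨hux, hvx⟩, hwx⟩
  refine ⟨fun w ↦ if hw : w ∈ ({u, v}ᶜ : Set V) then g ⟨w, hw⟩ else 0, fun w hwu hwv ↦ ?_⟩
  have hw : w ∈ ({u, v}ᶜ : Set V) := by simp [hwu, hwv]
  rcases hg ⟨w, hw⟩ with hcommon | ⟨z, hwz, hlt⟩
  · exact Or.inl hcommon
  · have hz : (z : V) ≠ u ∧ (z : V) ≠ v := by
      simpa only [mem_compl_iff, mem_insert_iff, mem_singleton_iff, not_or] using z.2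
    exact Or.inr ⟨z, hz.1, hz.2, hwz, by simpa [hw, z.2] using hlt⟩

theorem sum_lt_sum_insert_erase [DecidableEq V] (f : V → ℕ) {A : Finset V} {w z : V}
    (hw : w ∉ A) (hlt : f z < f w) :
    ∑ a ∈ A, (f a + 1) < ∑ a ∈ insert w (A.erase z), (f a + 1) := by
  have hwz : w ∉ A.erase z := fun h ↦ hw (Finset.mem_of_mem_erase h)
  rw [Finset.sum_insert hwz]
  by_cases hz : z ∈ A
  · rw [← Finset.sum_erase_add A _ hz]
    omega
  · rw [Finset.erase_eq_of_notMem hz]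
    omega

theorem exists_indep_sum_lt [DecidableEq V] [G.LocallyFinite] (huv : u ≠ v) {f : V → ℕ}
    (hf : ∀ w, w ≠ u → w ≠ v →
      (G.Adj u w ∧ G.Adj v w) ∨ ∃ z, z ≠ u ∧ z ≠ v ∧ G.Adj w z ∧ f z < f w)
    {A : Finset V} (huA : u ∈ A) (hvA : v ∈ A) (hA : Indep G A)
    {s : Set V} (hsA : Disjoint s A) (hsfin : s.Finite) (hsne : s.Nonempty)
    (hsparse : ∀ w ∈ s, (G.neighborSet w \ s).ncard ≤ 1) :
    ∃ A' : Finset V, u ∈ A' ∧ v ∈ A' ∧ Indep G A' ∧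
      ∑ a ∈ A, (f a + 1) < ∑ a ∈ A', (f a + 1) := by
  obtain ⟨w, hws, hwmin⟩ := exists_min_image s f hsfin hsne
  have hnotA : ∀ {a}, a ∈ A → a ∉ s := fun ha has ↦ hsA.notMem_of_mem_right ha has
  have hwA : w ∉ A := fun h ↦ hnotA h hws
  have hout := (ncard_le_one (toFinite _)).1 (hsparse w hws)
  rcases hf w (by rintro rfl; exact hwA huA) (by rintro rfl; exact hwA hvA)
    with ⟨hu, hv⟩ | ⟨z, hzu, hzv, hwz, hlt⟩
  · exact absurd (hout u ⟨hu.symm, hnotA huA⟩ v ⟨hv.symm, hnotA hvA⟩) huv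
  · have hzs : z ∉ s := fun hz ↦ (hwmin z hz).not_gt hlt
    have hunique : ∀ a ∈ (A : Set V), G.Adj w a → a = z := fun a ha hwa ↦
      hout a ⟨hwa, hnotA ha⟩ z ⟨hwz, hzs⟩
    refine ⟨insert w (A.erase z), by simp [huA, hzu.symm], by simp [hvA, hzv.symm], ?_,
      sum_lt_sum_insert_erase f hwA hlt⟩
    simpa using indep_insert_erase hA hunique

theorem degenerateOn_of_regular [G.LocallyFinite] {k : ℕ} {B : Set V}
    (hreg : ∀ v : V, (G.neighborSet v).ncard = k)
    (h : ∀ s ⊆ B, s.Finite → s.Nonempty → ∃ w ∈ s, 1 < (G.neighborSet w \ s).ncard) :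
    DegenerateOn G B (k - 2) := by
  intro s hsB hsfin hsne
  obtain ⟨w, hws, hout⟩ := h s hsB hsfin hsne
  refine ⟨w, hws, ?_⟩
  have := ncard_inter_add_ncard_sdiff_eq_ncard (G.neighborSet w) s
  rw [hreg w, inter_comm] at this
  omega

end

theorem stmt3_general {V : Type*} [Fintype V] (k : ℕ) (G : SimpleGraph V)
    (hreg : ∀ v : V, (G.neighborSet v).ncard = k)
    (u v : V) (huv : u ≠ v) (hnadj : ¬ G.Adj u v)
    (hstrong : ∀ w : ({u, v}ᶜ : Set V), ∃ x : ({u, v}ᶜ : Set V),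
      (G.induce ({u, v}ᶜ : Set V)).Reachable w x ∧ G.Adj u (x : V) ∧ G.Adj v (x : V)) :
    KDegenDecomp G k := by
  classical
  obtain ⟨f, hf⟩ := exists_potential_of_common_neighbour_reachable hstrong
  obtain ⟨A, hAmem, hmax⟩ := Finset.exists_max_image
    ({A | u ∈ A ∧ v ∈ A ∧ Indep G A} : Finset (Finset V)) (fun A ↦ ∑ a ∈ A, (f a + 1))
    ⟨{u, v}, by simpa using indep_pair hnadj⟩
  obtain ⟨huA, hvA, hA⟩ := Finset.mem_filter.1 hAmem |>.2
  refine ⟨A, (A : Set V)ᶜ, union_compl_self _, disjoint_compl_right, hA,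
    degenerateOn_of_regular hreg fun s hsA hsfin hsne ↦ ?_⟩
  by_contra! hsparse
  obtain ⟨A', huA', hvA', hA', hlt⟩ :=
    exists_indep_sum_lt huv hf huA hvA hA (subset_compl_iff_disjoint_right.1 hsA) hsfin hsne
      hsparse
  exact (hmax A' (by simp [huA', hvA', hA'])).not_gt hlt

/-- If `G` is connected, `k`-regular (`k ≥ 3`) and contains a strong pair `{u,v}`
(non-adjacent vertices with a common neighbour in every component of `G \ {u,v}`),
then `G` has a `k`-degenerate decomposition. -/
theorem stmt3 {V : Type*} [Fintype V] (k : ℕ) (hk : 3 ≤ k) (G : SimpleGraph V)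
    (hconn : G.Connected)
    (hreg : ∀ v : V, (G.neighborSet v).ncard = k)
    (u v : V) (huv : u ≠ v) (hnadj : ¬ G.Adj u v)
    (hstrong : ∀ w : ({u, v}ᶜ : Set V), ∃ x : ({u, v}ᶜ : Set V),
      (G.induce ({u, v}ᶜ : Set V)).Reachable w x ∧ G.Adj u (x : V) ∧ G.Adj v (x : V)) :
    KDegenDecomp G k :=
  stmt3_general k G hreg u v huv hnadj hstrong
end

section
/- Let k ≥ 3 and let G be a connected k-regular graph containing a clique C on k vertices whose neighbourhood N(C) = ⋃_{u∈C} N(u) \ C has exactly 2 vertices. Then G has a k-degenerate decomposition. -/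
/-!
Call `s` a `d`-core if every vertex of `s` has at least `d` neighbours in `s`; it suffices to
find an independent set `A` meeting every nonempty `(k-1)`-core, since then `G - A` is
`(k-2)`-degenerate.

Each vertex of the clique `C` has exactly one neighbour outside `C`, namely `x` or `y`; say `y`
has at least two neighbours in `C`, hence at most `k - 2` outside it. As `G` is connected and
`k`-regular, every proper induced subgraph is `(k-1)`-degenerate, and the greedy independent set
`X` taken along a degeneracy order of `G - C - y` meets every nonempty `(k-1)`-core avoiding
`C ∪ {y}`; these are all the cores avoiding `C`, since `y` has too few neighbours there.
We take `A = X ∪ {a}` with `a ∈ C`. A `(k-1)`-core avoiding `a` but meeting `C` contains every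
neighbour other than `a` of every vertex of `C - a`. For `a` next to `y` it therefore contains
`x`, `y` and all neighbours of `y` except `a`, so it meets `X` when `x ∈ X` or `y` has a
neighbour in `X`. Otherwise `X ∪ {y}` is independent, and `a` next to `x` forces `y` into the
core instead.
-/

open SimpleGraph Set

section Cores

variable {V : Type*} {G : SimpleGraph V}

def IsCore (G : SimpleGraph V) (d : ℕ) (s : Set V) : Prop :=
  ∀ v ∈ s, d ≤ (s ∩ G.neighborSet v).ncard

def MeetsCores (G : SimpleGraph V) (d : ℕ) (U X : Set V) : Prop :=
  ∀ s ⊆ U, s.Nonempty → IsCore G d s → (s ∩ X).Nonempty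

variable {d k : ℕ} {s T U X : Set V} {a v z : V}

theorem MeetsCores.mono {Y : Set V} (h : MeetsCores G d U X) (hXY : X ⊆ Y) :
    MeetsCores G d U Y :=
  fun s hsU hs hcore => (h s hsU hs hcore).mono (inter_subset_inter_right s hXY)

theorem MeetsCores.of_sdiff_singleton (h : MeetsCores G d (U \ {z}) X)
    (hz : ∀ s ⊆ U, IsCore G d s → z ∈ s → (s ∩ X).Nonempty) : MeetsCores G d U X := by
  intro s hsU hs hcore
  by_cases hzs : z ∈ s
  · exact hz s hsU hcore hzs
  · exact h s (subset_sdiff_singleton hsU hzs) hs hcore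

theorem kDegenDecomp_of_meetsCores {A : Set V} (hk : 2 ≤ k) (hA : G.IsIndepSet A)
    (hAc : MeetsCores G (k - 1) univ A) : KDegenDecomp G k := by
  refine ⟨A, Aᶜ, union_compl_self A, disjoint_compl_right,
    fun u hu v hv huv => hA hu hv (G.ne_of_adj huv) huv, fun s hs _ hne => ?_⟩
  by_contra! hdeg
  obtain ⟨v, hvs, hvA⟩ := hAc s (subset_univ s) hne fun v hv => by have := hdeg v hv; omega
  exact hs hvs hvA

theorem kDegenDecomp_of_insert {C : Set V} (hk : 2 ≤ k) (hX : MeetsCores G (k - 1) Cᶜ X)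
    (hind : G.IsIndepSet (insert a X))
    (hforce : ∀ s, IsCore G (k - 1) s → a ∉ s → (s ∩ C).Nonempty → (s ∩ X).Nonempty) :
    KDegenDecomp G k := by
  refine kDegenDecomp_of_meetsCores hk hind fun s _ hne hcore => ?_
  have hmono : s ∩ X ⊆ s ∩ insert a X := inter_subset_inter_right s (subset_insert a X)
  by_cases has : a ∈ s
  · exact ⟨a, has, mem_insert a X⟩
  by_cases hsC : (s ∩ C).Nonempty
  · exact (hforce s hcore has hsC).mono hmono
  · exact (hX s (fun v hv hvC => hsC ⟨v, hv, hvC⟩) hne hcore).mono hmono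

variable [Fintype V]

theorem IsCore.subset_of_inter_neighborSet_subset (hs : IsCore G d s) (hv : v ∈ s)
    (hsT : s ∩ G.neighborSet v ⊆ T) (hT : T.ncard ≤ d) : T ⊆ s := by
  rw [← eq_of_subset_of_ncard_le hsT (hT.trans (hs v hv))]
  exact inter_subset_left

theorem IsCore.neighborSet_sdiff_subset (hs : IsCore G (k - 1) s) (hv : v ∈ s)
    (hdeg : (G.neighborSet v).ncard = k) (hva : G.Adj v a) (has : a ∉ s) :
    G.neighborSet v \ {a} ⊆ s :=
  hs.subset_of_inter_neighborSet_subset hv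
    (fun _ ⟨hus, huv⟩ => ⟨huv, fun h => has (h ▸ hus)⟩)
    (by rw [ncard_sdiff_singleton_of_mem (s := G.neighborSet v) hva, hdeg])

theorem MeetsCores.of_sdiff_singleton_of_ncard_lt (h : MeetsCores G d (U \ {z}) X)
    (hz : (U ∩ G.neighborSet z).ncard < d) : MeetsCores G d U X :=
  h.of_sdiff_singleton fun _ hsU hcore hzs =>
    absurd ((hcore z hzs).trans (ncard_le_ncard (inter_subset_inter_left _ hsU))) hz.not_ge

theorem exists_isIndepSet_meetsCores_of_sdiff_singleton (hzU : z ∈ U)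
    (hz : (U ∩ G.neighborSet z).ncard ≤ d) (hXU : X ⊆ U \ {z}) (hX : G.IsIndepSet X)
    (hXc : MeetsCores G d (U \ {z}) X) : ∃ Y ⊆ U, G.IsIndepSet Y ∧ MeetsCores G d U Y := by
  by_cases hzX : ∃ u ∈ X, G.Adj z u
  · obtain ⟨u, huX, hzu⟩ := hzX
    refine ⟨X, hXU.trans sdiff_subset, hX,
      hXc.of_sdiff_singleton fun s hsU hcore hzs => ⟨u, ?_, huX⟩⟩
    exact hcore.subset_of_inter_neighborSet_subset hzs (inter_subset_inter_left _ hsU) hz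
      ⟨(hXU huX).1, hzu⟩
  · push Not at hzX
    exact ⟨insert z X, insert_subset hzU (hXU.trans sdiff_subset),
      hX.insert fun u huX _ => ⟨hzX u huX, fun h => hzX u huX h.symm⟩,
      (hXc.mono (subset_insert z X)).of_sdiff_singleton fun _ _ _ hzs =>
        ⟨z, hzs, mem_insert z X⟩⟩

theorem exists_isIndepSet_meetsCores (hU : DegenerateOn G U d) :
    ∃ X ⊆ U, G.IsIndepSet X ∧ MeetsCores G d U X := by
  obtain ⟨n, hn⟩ : ∃ n, U.ncard = n := ⟨_, rfl⟩
  induction n generalizing U with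
  | zero =>
    rw [ncard_eq_zero] at hn
    subst hn
    exact ⟨∅, empty_subset _, pairwise_empty _,
      fun _ hs hne _ => absurd (subset_empty_iff.1 hs) hne.ne_empty⟩
  | succ n ih =>
    obtain ⟨z, hzU, hz⟩ := hU U Subset.rfl (toFinite U) (nonempty_of_ncard_ne_zero (by omega))
    obtain ⟨X, hXU, hX, hXc⟩ := ih (fun s hs => hU s (hs.trans sdiff_subset))
      (by rw [ncard_sdiff_singleton_of_mem hzU, hn, Nat.add_sub_cancel])
    exact exists_isIndepSet_meetsCores_of_sdiff_singleton hzU hz hXU hX hXc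

theorem degenerateOn_pred_of_notMem (hconn : G.Connected)
    (hreg : ∀ v, (G.neighborSet v).ncard = k) (hv : v ∉ U) : DegenerateOn G U (k - 1) := by
  intro W hWU _ ⟨w, hw⟩
  obtain ⟨e, -, heW, heW'⟩ :=
    (hconn.preconnected w v).some.exists_boundary_dart W hw fun h => hv (hWU h)
  refine ⟨e.fst, heW, ?_⟩
  by_contra! hlt
  have hN : W ∩ G.neighborSet e.fst = G.neighborSet e.fst :=
    eq_of_subset_of_ncard_le inter_subset_right (by rw [hreg]; omega)
  exact heW' (hN.symm.subset e.adj).1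

end Cores

section Clique

variable {V : Type*} [Fintype V] {G : SimpleGraph V} {k : ℕ} {C s X : Set V} {a c w w' y : V}

theorem SimpleGraph.IsClique.ncard_neighborSet_sdiff (hreg : ∀ v, (G.neighborSet v).ncard = k)
    (hC : G.IsClique C) (hcard : C.ncard = k) (hc : c ∈ C) : (G.neighborSet c \ C).ncard = 1 := by
  have hin : G.neighborSet c ∩ C = C \ {c} := by
    ext v
    exact ⟨fun ⟨hcv, hv⟩ => ⟨hv, (G.ne_of_adj hcv).symm⟩,
      fun ⟨hv, hvc⟩ => ⟨hC hc hv (Ne.symm hvc), hv⟩⟩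
  have hsplit := ncard_inter_add_ncard_sdiff_eq_ncard (G.neighborSet c) C
  rw [hin, ncard_sdiff_singleton_of_mem hc, hcard, hreg] at hsplit
  have : 0 < k := hcard ▸ (ncard_pos (toFinite C)).2 ⟨c, hc⟩
  omega

theorem SimpleGraph.IsClique.eq_of_adj_of_adj (hreg : ∀ v, (G.neighborSet v).ncard = k)
    (hC : G.IsClique C) (hcard : C.ncard = k) (hc : c ∈ C) (hw : w ∉ C) (hw' : w' ∉ C)
    (hcw : G.Adj c w) (hcw' : G.Adj c w') : w = w' :=
  (ncard_le_one_iff (toFinite _)).1 (hC.ncard_neighborSet_sdiff hreg hcard hc).le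
    ⟨hcw, hw⟩ ⟨hcw', hw'⟩

theorem SimpleGraph.IsClique.exists_adj_notMem (hreg : ∀ v, (G.neighborSet v).ncard = k)
    (hC : G.IsClique C) (hcard : C.ncard = k) (hc : c ∈ C) : ∃ w ∉ C, G.Adj c w := by
  obtain ⟨w, hcw, hw⟩ := nonempty_of_ncard_ne_zero
    (by rw [hC.ncard_neighborSet_sdiff hreg hcard hc]; omega)
  exact ⟨w, hw, hcw⟩

theorem isIndepSet_insert_of_isClique (hreg : ∀ v, (G.neighborSet v).ncard = k)
    (hC : G.IsClique C) (hcard : C.ncard = k) (hX : G.IsIndepSet X) (hXC : X ⊆ Cᶜ)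
    (ha : a ∈ C) (haw : G.Adj a w) (hw : w ∉ C) (hwX : w ∉ X) : G.IsIndepSet (insert a X) :=
  hX.insert fun u huX _ =>
    have hau : ¬ G.Adj a u := fun hau =>
      hwX (hC.eq_of_adj_of_adj hreg hcard ha hw (hXC huX) haw hau ▸ huX)
    ⟨hau, fun h => hau h.symm⟩

theorem IsCore.mem_of_isClique (hreg : ∀ v, (G.neighborSet v).ncard = k) (hC : G.IsClique C)
    (hs : IsCore G (k - 1) s) (ha : a ∈ C) (has : a ∉ s) (hsC : (s ∩ C).Nonempty)
    (hc : c ∈ C) (hca : c ≠ a) (hcw : G.Adj c w) (hwa : w ≠ a) : w ∈ s := by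
  obtain ⟨c₀, hc₀s, hc₀C⟩ := hsC
  have hforce : ∀ {v}, v ∈ s → v ∈ C → G.neighborSet v \ {a} ⊆ s := fun hv hvC =>
    hs.neighborSet_sdiff_subset hv (hreg _) (hC hvC ha fun h => has (h ▸ hv)) has
  have hcs : c ∈ s := by
    rcases eq_or_ne c c₀ with rfl | hcc₀
    · exact hc₀s
    · exact hforce hc₀s hc₀C ⟨hC hc₀C hc hcc₀.symm, hca⟩
  exact hforce hcs hc ⟨hcw, hwa⟩

theorem ncard_compl_inter_neighborSet_lt (hreg : ∀ v, (G.neighborSet v).ncard = k)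
    (hy : 2 ≤ (C ∩ G.neighborSet y).ncard) :
    (Cᶜ ∩ G.neighborSet y).ncard < k - 1 := by
  have hsplit := ncard_inter_add_ncard_sdiff_eq_ncard (G.neighborSet y) C
  rw [inter_comm, hreg, sdiff_eq_compl_inter] at hsplit
  omega

theorem kDegenDecomp_of_isClique {x : V} (hconn : G.Connected)
    (hreg : ∀ v, (G.neighborSet v).ncard = k) (hcard : C.ncard = k) (hC : G.IsClique C)
    (hxy : x ≠ y) (hxC : x ∉ C) (hyC : y ∉ C) (hx : ∃ c ∈ C, G.Adj c x)
    (hy : 2 ≤ (C ∩ G.neighborSet y).ncard) : KDegenDecomp G k := by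
  have hk : 2 ≤ k := hcard ▸ hy.trans (ncard_le_ncard inter_subset_left)
  obtain ⟨X, hXU, hX, hXc⟩ := exists_isIndepSet_meetsCores
    (degenerateOn_pred_of_notMem hconn hreg (fun h => h.2 rfl : y ∉ Cᶜ \ {y}))
  have hXC : X ⊆ Cᶜ := hXU.trans sdiff_subset
  have hyX : y ∉ X := fun h => (hXU h).2 rfl
  replace hXc := hXc.of_sdiff_singleton_of_ncard_lt (ncard_compl_inter_neighborSet_lt hreg hy)
  obtain ⟨a, b, ⟨haC, hya⟩, ⟨hbC, hyb⟩, hab⟩ := (one_lt_ncard_iff (toFinite _)).1 hy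
  obtain ⟨c, hcC, hcx⟩ := hx
  have hnot_both : ∀ {c'}, c' ∈ C → G.Adj c' x → ¬ G.Adj c' y := fun hc' hc'x hc'y =>
    hxy (hC.eq_of_adj_of_adj hreg hcard hc' hxC hyC hc'x hc'y)
  have hca : c ≠ a := fun h => hnot_both hcC hcx (h ▸ hya.symm)
  have hcb : c ≠ b := fun h => hnot_both hcC hcx (h ▸ hyb.symm)
  have hA : G.IsIndepSet (insert a X) :=
    isIndepSet_insert_of_isClique hreg hC hcard hX hXC haC hya.symm hyC hyX
  by_cases hxX : x ∈ X
  · refine kDegenDecomp_of_insert hk hXc hA fun s hs has hsC => ⟨x, ?_, hxX⟩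
    exact hs.mem_of_isClique hreg hC haC has hsC hcC hca hcx (ne_of_mem_of_not_mem haC hxC).symm
  by_cases hyN : ∃ u ∈ X, G.Adj y u
  · obtain ⟨u, huX, hyu⟩ := hyN
    refine kDegenDecomp_of_insert hk hXc hA fun s hs has hsC => ⟨u, ?_, huX⟩
    have hys : y ∈ s := hs.mem_of_isClique hreg hC haC has hsC hbC hab.symm hyb.symm
      (ne_of_mem_of_not_mem haC hyC).symm
    exact hs.neighborSet_sdiff_subset hys (hreg y) hya has
      ⟨hyu, fun h => hXC huX (h ▸ haC)⟩
  · push Not at hyN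
    have hyX' : G.IsIndepSet (insert y X) :=
      hX.insert fun u huX _ => ⟨hyN u huX, fun h => hyN u huX h.symm⟩
    refine kDegenDecomp_of_insert hk (hXc.mono (subset_insert y X))
      (isIndepSet_insert_of_isClique hreg hC hcard hyX' (insert_subset hyC hXC) hcC hcx hxC
        (by rintro (h | h); exacts [hxy h, hxX h]))
      fun s hs hcs hsC => ⟨y, ?_, mem_insert y X⟩
    exact hs.mem_of_isClique hreg hC hcC hcs hsC hbC hcb.symm hyb.symm
      (ne_of_mem_of_not_mem hcC hyC).symm

end Clique

/-- If `G` is connected, `k`-regular (`k ≥ 3`) and contains a clique `C` on `k` vertices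
whose neighbourhood has exactly two vertices, then `G` has a `k`-degenerate
decomposition. -/
theorem stmt5 {V : Type*} [Fintype V] (k : ℕ) (hk : 3 ≤ k) (G : SimpleGraph V)
    (hconn : G.Connected)
    (hreg : ∀ v : V, (G.neighborSet v).ncard = k)
    (C : Set V) (hcard : C.ncard = k)
    (hclique : ∀ a ∈ C, ∀ b ∈ C, a ≠ b → G.Adj a b)
    (hnbhd : ({w : V | w ∉ C ∧ ∃ c ∈ C, G.Adj c w}).ncard = 2) :
    KDegenDecomp G k := by
  obtain ⟨x, y, hxy, hN⟩ := ncard_eq_two.1 hnbhd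
  have hN' : ∀ w, (w ∉ C ∧ ∃ c ∈ C, G.Adj c w) ↔ w = x ∨ w = y := fun w => by
    simpa using Set.ext_iff.1 hN w
  have hC : G.IsClique C := fun a ha b hb hab => hclique a ha b hb hab
  obtain ⟨hxC, hx⟩ := (hN' x).2 (Or.inl rfl)
  obtain ⟨hyC, hy⟩ := (hN' y).2 (Or.inr rfl)
  have hcover : C ⊆ (C ∩ G.neighborSet x) ∪ (C ∩ G.neighborSet y) := fun c hc => by
    obtain ⟨w, hwC, hcw⟩ := hC.exists_adj_notMem hreg hcard hc
    rcases (hN' w).1 ⟨hwC, c, hc, hcw⟩ with rfl | rfl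
    exacts [Or.inl ⟨hc, hcw.symm⟩, Or.inr ⟨hc, hcw.symm⟩]
  have hsum := (ncard_le_ncard hcover).trans (ncard_union_le _ _)
  rcases le_or_gt 2 (C ∩ G.neighborSet y).ncard with h | h
  · exact kDegenDecomp_of_isClique hconn hreg hcard hC hxy hxC hyC hx h
  · exact kDegenDecomp_of_isClique hconn hreg hcard hC hxy.symm hyC hxC hy (by omega)
end

section
/- Let k ≥ 3 and let G be a connected k-regular graph with no subgraph isomorphic to K_{k+1}. If u and v are non-adjacent vertices with a common neighbour such that G \ {u,v} is connected, then {u,v} is a strong pair; moreover, the graph G' obtained by identifying u and v into a single vertex z with N(z) = N(u) ∪ N(v) is (k-1)-degenerate. -/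
open SimpleGraph Set

/-!
In the identified graph `G'` every vertex other than the merged vertex `z` has degree at most
`k`, and the common neighbour `w` has degree at most `k - 1`, because its edges to `u` and `v`
merge. So if every vertex of a finite set `s` had at least `k` neighbours in `s`, each vertex of
`s` other than `z` would keep its whole neighbourhood inside `s`; since `G' - z ≅ G \ {u, v}` is
connected, `s` would contain `w`, which is impossible. (`s = {z}` fails because `z` has no
neighbour in it.)
-/

section Degeneracy

variable {W : Type*} (H : SimpleGraph W)

lemma mem_of_reachable_of_neighborSet_subset {S T : Set W}
    (hS : ∀ x ∈ S, x ∈ T → H.neighborSet x ⊆ S) {a b : T}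
    (hab : (H.induce T).Reachable a b) (ha : (a : W) ∈ S) : (b : W) ∈ S := by
  obtain ⟨p⟩ := hab
  induction p with
  | nil => exact ha
  | cons hadj _ ih => exact ih (hS _ ha (Subtype.prop _) hadj)

lemma degenerate_of_preconnected_induce_compl_singleton [Finite W] (d : ℕ) {z w : W}
    (hwz : w ≠ z) (hdeg : ∀ x, x ≠ z → (H.neighborSet x).ncard ≤ d + 1)
    (hw : (H.neighborSet w).ncard ≤ d) (hconn : (H.induce {z}ᶜ).Preconnected) :
    Degenerate H d := by
  intro s _ _ hne
  by_contra! hmin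
  have hclosed : ∀ x ∈ s, x ∈ ({z}ᶜ : Set W) → H.neighborSet x ⊆ s := fun x hx hxz =>
    eq_of_subset_of_ncard_le inter_subset_right ((hdeg x hxz).trans (hmin x hx)) ▸
      inter_subset_left
  have hws : w ∉ s := fun hws =>
    ((hmin w hws).trans_le (ncard_inter_le_ncard_right _ _)).not_ge hw
  obtain ⟨x, hxs, hxz⟩ : ∃ x ∈ s, x ≠ z := by
    by_contra! hsz
    obtain ⟨y, hy⟩ := hne
    have hempty : s ∩ H.neighborSet y = ∅ := eq_empty_iff_forall_notMem.2
      fun t ⟨hts, hyt⟩ => H.ne_of_adj hyt ((hsz y hy).trans (hsz t hts).symm)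
    simpa [hempty] using hmin y hy
  exact hws (mem_of_reachable_of_neighborSet_subset H hclosed
    (hconn ⟨x, hxz⟩ ⟨w, hwz⟩) hxs)

end Degeneracy

namespace SimpleGraph

variable {V : Type*} (G : SimpleGraph V) {u v : V}

/-- The identification of `u` and `v`, with `u` standing for the merged vertex. -/
def identify (u v : V) : SimpleGraph {x : V // x ≠ v} :=
  fromRel fun a b => G.Adj a b ∨ ((a : V) = u ∧ G.Adj v b) ∨ ((b : V) = u ∧ G.Adj a v)

lemma identify_adj_of_ne {a b : {x : V // x ≠ v}} (ha : (a : V) ≠ u) :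
    (G.identify u v).Adj a b ↔ G.Adj a b ∨ ((b : V) = u ∧ G.Adj a v) := by
  rw [identify, fromRel_adj]
  constructor
  · rintro ⟨-, (h | ⟨h, -⟩ | h) | (h | ⟨h, hv⟩ | ⟨h, -⟩)⟩
    exacts [.inl h, absurd h ha, .inr h, .inl h.symm, .inr ⟨h, hv.symm⟩, absurd h ha]
  · rintro (h | ⟨h, hv⟩)
    · exact ⟨fun hab => G.ne_of_adj h (congrArg Subtype.val hab), .inl (.inl h)⟩
    · exact ⟨fun hab => ha (congrArg Subtype.val hab ▸ h), .inl (.inr (.inr ⟨h, hv⟩))⟩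

open Classical in
noncomputable def identifyMap (huv : u ≠ v) (y : V) : {x : V // x ≠ v} :=
  if h : y = v then ⟨u, huv⟩ else ⟨y, h⟩

lemma identifyMap_of_ne (huv : u ≠ v) {y : V} (hy : y ≠ v) : identifyMap huv y = ⟨y, hy⟩ :=
  dif_neg hy

lemma identifyMap_self (huv : u ≠ v) : identifyMap huv v = identifyMap huv u := by
  rw [identifyMap_of_ne huv huv, identifyMap, dif_pos rfl]

lemma neighborSet_identify_subset_image (huv : u ≠ v) {a : {x : V // x ≠ v}}
    (ha : (a : V) ≠ u) :
    (G.identify u v).neighborSet a ⊆ identifyMap huv '' G.neighborSet a := by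
  intro b hb
  rcases (G.identify_adj_of_ne ha).1 hb with h | ⟨h, hv⟩
  · exact ⟨b, h, identifyMap_of_ne huv b.2⟩
  · refine ⟨v, hv, ?_⟩
    rw [identifyMap_self, identifyMap_of_ne huv huv]
    exact Subtype.ext h.symm

lemma preconnected_induce_identify (huv : u ≠ v)
    (hdel : (G.induce ({u, v}ᶜ : Set V)).Preconnected) :
    ((G.identify u v).induce ({⟨u, huv⟩}ᶜ : Set {x : V // x ≠ v})).Preconnected := by
  have mem_compl_pair {x : V} : x ∈ ({u, v}ᶜ : Set V) ↔ x ≠ u ∧ x ≠ v := by simp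
  let f : G.induce ({u, v}ᶜ : Set V) →g (G.identify u v).induce ({⟨u, huv⟩}ᶜ : Set _) :=
    { toFun x := ⟨⟨x, (mem_compl_pair.1 x.2).2⟩,
        fun h => (mem_compl_pair.1 x.2).1 (congrArg Subtype.val h)⟩
      map_rel' {x y} (h : G.Adj x y) := by
        change (G.identify u v).Adj _ _
        exact (fromRel_adj _ _ _).2
          ⟨fun hxy => G.ne_of_adj h congr($hxy.1), .inl (.inl h)⟩ }
  exact hdel.map f fun y =>
    ⟨⟨y.1.1, mem_compl_pair.2 ⟨fun h => y.2 (Subtype.ext h), y.1.2⟩⟩, rfl⟩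

variable [Finite V]

lemma ncard_neighborSet_identify_le (huv : u ≠ v) {a : {x : V // x ≠ v}} (ha : (a : V) ≠ u) :
    ((G.identify u v).neighborSet a).ncard ≤ (G.neighborSet a).ncard :=
  (ncard_le_ncard (G.neighborSet_identify_subset_image huv ha)).trans ncard_image_le

lemma ncard_neighborSet_identify_lt (huv : u ≠ v) {a : {x : V // x ≠ v}} (ha : (a : V) ≠ u)
    (hau : G.Adj a u) (hav : G.Adj a v) :
    ((G.identify u v).neighborSet a).ncard < (G.neighborSet a).ncard := by
  have hnot_inj : ¬ InjOn (identifyMap huv) (G.neighborSet a) := fun hinj =>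
    huv (hinj hau hav (identifyMap_self huv).symm)
  exact (ncard_le_ncard (G.neighborSet_identify_subset_image huv ha)).trans_lt
    (lt_of_le_of_ne ncard_image_le fun h => hnot_inj (injOn_of_ncard_image_eq h))

end SimpleGraph

theorem stmt6_general {V : Type*} [Fintype V] (k : ℕ) (G : SimpleGraph V)
    (hreg : ∀ v : V, (G.neighborSet v).ncard = k)
    (u v w : V) (huv : u ≠ v)
    (hw : G.Adj u w ∧ G.Adj v w)
    (hdel : (G.induce ({u, v}ᶜ : Set V)).Connected) :
    (∀ x : ({u, v}ᶜ : Set V), ∃ y : ({u, v}ᶜ : Set V),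
      (G.induce ({u, v}ᶜ : Set V)).Reachable x y ∧ G.Adj u (y : V) ∧ G.Adj v (y : V)) ∧
    Degenerate
      (SimpleGraph.fromRel (fun a b : {x : V // x ≠ v} =>
        G.Adj (a : V) (b : V) ∨ ((a : V) = u ∧ G.Adj v (b : V)) ∨
          ((b : V) = u ∧ G.Adj (a : V) v)))
      (k - 1) := by
  obtain ⟨hwu, hwv⟩ := hw
  have hw_mem : w ∈ ({u, v}ᶜ : Set V) := by simp [hwu.ne', hwv.ne']
  refine ⟨fun x => ⟨⟨w, hw_mem⟩, hdel.preconnected x _, hwu, hwv⟩, ?_⟩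
  refine degenerate_of_preconnected_induce_compl_singleton (G.identify u v) (k - 1)
    (z := ⟨u, huv⟩) (w := ⟨w, hwv.ne'⟩) (fun h => hwu.ne' (congrArg Subtype.val h))
    (fun x hx => ?_) ?_ (G.preconnected_induce_identify huv hdel.preconnected)
  · have := G.ncard_neighborSet_identify_le huv (a := x) fun h => hx (Subtype.ext h)
    rw [hreg] at this
    omega
  · have := G.ncard_neighborSet_identify_lt huv (a := ⟨w, hwv.ne'⟩) hwu.ne' hwu.symm hwv.symm
    rw [hreg] at this
    omega

/-- In a connected `k`-regular graph (`k ≥ 3`) with no `K_{k+1}` subgraph: if `u, v` are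
non-adjacent vertices with a common neighbour such that `G \ {u,v}` is connected, then
`{u,v}` is a strong pair, and the graph obtained by identifying `u` and `v` into one
vertex (here modelled on the subtype `{x // x ≠ v}`, with `u` playing the role of the
identified vertex `z`, adjacent to `N(u) ∪ N(v)`) is `(k-1)`-degenerate. -/
theorem stmt6 {V : Type*} [Fintype V] (k : ℕ) (hk : 3 ≤ k) (G : SimpleGraph V)
    (hconn : G.Connected)
    (hreg : ∀ v : V, (G.neighborSet v).ncard = k)
    (hfree : G.CliqueFree (k + 1))
    (u v w : V) (huv : u ≠ v) (hnadj : ¬ G.Adj u v)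
    (hw : G.Adj u w ∧ G.Adj v w)
    (hdel : (G.induce ({u, v}ᶜ : Set V)).Connected) :
    (∀ x : ({u, v}ᶜ : Set V), ∃ y : ({u, v}ᶜ : Set V),
      (G.induce ({u, v}ᶜ : Set V)).Reachable x y ∧ G.Adj u (y : V) ∧ G.Adj v (y : V)) ∧
    Degenerate
      (SimpleGraph.fromRel (fun a b : {x : V // x ≠ v} =>
        G.Adj (a : V) (b : V) ∨ ((a : V) = u ∧ G.Adj v (b : V)) ∨
          ((b : V) = u ∧ G.Adj (a : V) v)))
      (k - 1) :=
  stmt6_general k G hreg u v w huv hw hdel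
end

section
/- In a subcubic graph with a proper assignment of vertices to classes A (independent) and B (inducing a forest), if u and v are false twins (non-adjacent vertices with the same neighbourhood, each of degree at most 3), then placing u and v in A and all their common neighbours in B, keeping the assignment of all other vertices, again yields a valid near-bipartite decomposition. -/
open SimpleGraph Set

/-!
A common neighbour `w` of the twins `u`, `v` is adjacent to both of them, and they leave the
forest side, so by subcubicity `w` keeps at most one neighbour there. Every vertex of a cycle
has two distinct neighbours on it, so a cycle of the new forest side avoids `N(u)` and is
therefore a cycle of the old one. The independent side stays independent because it loses
`N(u) = N(v)`, and the twins are non-adjacent.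
-/

lemma Set.subsingleton_sdiff_pair_of_ncard_le_three {α : Type*} {s : Set α} {a b : α}
    (hs : s.ncard ≤ 3) (hfin : s.Finite) (ha : a ∈ s) (hb : b ∈ s) (hab : a ≠ b) :
    (s \ {a, b}).Subsingleton := by
  have hcard : (s \ {a, b}).ncard ≤ 1 := by
    rw [Set.ncard_sdiff' (Set.pair_subset ha hb) hfin, Set.ncard_pair hab]
    omega
  rw [← Set.encard_le_one_iff_subsingleton, ← hfin.sdiff.cast_ncard_eq]
  exact_mod_cast hcard

namespace SimpleGraph

variable {V : Type*} {G : SimpleGraph V}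

lemma Walk.IsCycle.not_subsingleton_inter_neighborSet {u w : V} {c : G.Walk u u}
    (hc : c.IsCycle) (hw : w ∈ c.support) {t : Set V} (ht : ∀ z ∈ c.support, z ∈ t) :
    ¬ (t ∩ G.neighborSet w).Subsingleton := by
  intro hsub
  obtain ⟨a, b, hab, hpair⟩ := Set.ncard_eq_two.mp (hc.ncard_neighborSet_toSubgraph_eq_two hw)
  have hle : c.toSubgraph.neighborSet w ⊆ t ∩ G.neighborSet w := fun z hz =>
    ⟨ht z (c.mem_verts_toSubgraph.mp hz.snd_mem), hz.adj_sub⟩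
  rw [hpair] at hle
  exact hab (hsub (hle (Set.mem_insert a {b})) (hle (Set.mem_insert_of_mem a rfl)))

lemma IsAcyclic.induce_of_subsingleton_inter_neighborSet {s t : Set V}
    (hs : (G.induce s).IsAcyclic)
    (ht : ∀ w ∈ t, w ∉ s → (t ∩ G.neighborSet w).Subsingleton) :
    (G.induce t).IsAcyclic := by
  intro x c hc
  set c' := c.map (Embedding.induce t).toHom
  have hc' : c'.IsCycle := hc.map (Embedding.induce (G := G) t).injective
  have hc't : ∀ z ∈ c'.support, z ∈ t := by
    intro z hz
    obtain ⟨z', -, rfl⟩ := List.mem_map.mp (by simpa only [c', Walk.support_map] using hz)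
    exact z'.2
  have hc's : ∀ z ∈ c'.support, z ∈ s := fun z hz => by
    by_contra hzs
    exact hc'.not_subsingleton_inter_neighborSet hz hc't (ht z (hc't z hz) hzs)
  refine hs (c'.induce s hc's) ((Walk.isCycle_map_iff_of_injective
    (f := (Embedding.induce s).toHom) Subtype.val_injective).mp ?_)
  rwa [Walk.map_induce]

end SimpleGraph

lemma Indep.sdiff_neighborSet_union_pair {V : Type*} {G : SimpleGraph V} {A : Set V}
    (hA : Indep G A) {u v : V} (htwin : G.neighborSet u = G.neighborSet v) :
    Indep G ((A \ G.neighborSet u) ∪ {u, v}) := by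
  have hN : ∀ z, G.Adj u z ↔ G.Adj v z := fun z => Set.ext_iff.mp htwin z
  rintro x hx y hy hxy
  simp only [mem_union, mem_sdiff, mem_neighborSet, mem_insert_iff, mem_singleton_iff] at hx hy
  rcases hx with ⟨hxA, hxu⟩ | rfl | rfl <;> rcases hy with ⟨hyA, hyu⟩ | rfl | rfl
  · exact hA x hxA y hyA hxy
  all_goals grind [G.adj_comm, G.irrefl]

/-- In a subcubic graph with a near-bipartite decomposition `(A, B)`, if `u` and `v` are
false twins, then moving `u` and `v` into the independent side and all their common
neighbours into the forest side again yields a near-bipartite decomposition. -/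
theorem stmt9 {V : Type*} [Fintype V] (G : SimpleGraph V)
    (hdeg : ∀ v : V, (G.neighborSet v).ncard ≤ 3)
    (A B : Set V)
    (hpart : A ∪ B = Set.univ) (hdisj : Disjoint A B)
    (hA : Indep G A) (hB : (G.induce B).IsAcyclic)
    (u v : V) (huv : u ≠ v)
    (htwin : G.neighborSet u = G.neighborSet v) :
    ((A \ G.neighborSet u) ∪ {u, v}) ∪ ((B ∪ G.neighborSet u) \ {u, v}) = Set.univ ∧
    Disjoint ((A \ G.neighborSet u) ∪ {u, v}) ((B ∪ G.neighborSet u) \ {u, v}) ∧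
    Indep G ((A \ G.neighborSet u) ∪ {u, v}) ∧
    (G.induce ((B ∪ G.neighborSet u) \ {u, v})).IsAcyclic := by
  refine ⟨?_, ?_, hA.sdiff_neighborSet_union_pair htwin, ?_⟩
  · refine Set.eq_univ_of_forall fun x => ?_
    have hx : x ∈ A ∪ B := hpart ▸ Set.mem_univ x
    simp only [mem_union, mem_sdiff] at hx ⊢
    tauto
  · rw [Set.disjoint_left]
    rintro x (⟨hxA, hxu⟩ | hx) ⟨hxB | hxu', hx'⟩
    exacts [hdisj.ne_of_mem hxA hxB rfl, hxu hxu', hx' hx, hx' hx]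
  · refine hB.induce_of_subsingleton_inter_neighborSet fun w hw hwB => ?_
    have hwu : G.Adj u w := hw.1.resolve_left hwB
    have hwv : G.Adj v w := (Set.ext_iff.mp htwin w).mp hwu
    refine (Set.subsingleton_sdiff_pair_of_ncard_le_three (hdeg w) (Set.toFinite _)
      hwu.symm hwv.symm huv).anti ?_
    rintro z ⟨hz, hzw⟩
    exact ⟨hzw, hz.2⟩
end

section
/- Every graph admitting an acyclic 3-colouring is near-bipartite, but there exist near-bipartite graphs with no acyclic 3-colouring. -/
open SimpleGraph Set

/-- A proper 3-colouring is acyclic if every two colour classes together induce a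
forest. -/
def IsAcyclic3Colouring {V : Type*} (G : SimpleGraph V) (c : V → Fin 3) : Prop :=
  (∀ u v : V, G.Adj u v → c u ≠ c v) ∧
    ∀ i j : Fin 3, (G.induce {v : V | c v = i ∨ c v = j}).IsAcyclic

/-!
Given an acyclic 3-colouring, colour class `0` is independent and classes `1, 2` together
induce a forest, so the graph is near-bipartite. Every bipartite graph is near-bipartite,
but `K₃,₃` has no acyclic 3-colouring: each side of it sees at most two colours, so by
pigeonhole each side contains two vertices of equal colour, and these four vertices span a
4-cycle within two colour classes.
-/

section

variable {V : Type*} {G : SimpleGraph V}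

lemma indep_setOf_eq_of_adj_ne {C : Type*} {c : V → C} (hc : ∀ u v, G.Adj u v → c u ≠ c v)
    (k : C) : Indep G {v | c v = k} :=
  fun _ hu _ hv hadj => hc _ _ hadj (hu.trans hv.symm)

lemma Indep.isAcyclic_induce {A : Set V} (hA : Indep G A) : (G.induce A).IsAcyclic := by
  have hbot : G.induce A = ⊥ := by
    ext u v
    exact iff_of_false (hA u u.2 v v.2) id
  exact hbot ▸ isAcyclic_bot

lemma nearBipartite_of_indep_of_isAcyclic_induce_compl {A : Set V} (hA : Indep G A)
    (hB : (G.induce Aᶜ).IsAcyclic) : NearBipartite G :=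
  ⟨A, Aᶜ, union_compl_self A, disjoint_compl_right, hA, hB⟩

lemma SimpleGraph.IsBipartite.nearBipartite (hG : G.IsBipartite) : NearBipartite G := by
  obtain ⟨c⟩ := hG
  have hc : ∀ u v, G.Adj u v → c u ≠ c v := fun _ _ h => c.valid h
  have hcompl : {v | c v = 0}ᶜ = {v | c v = 1} := by
    ext v
    simp only [mem_compl_iff, mem_ofPred_eq]
    omega
  refine nearBipartite_of_indep_of_isAcyclic_induce_compl (indep_setOf_eq_of_adj_ne hc 0) ?_
  rw [hcompl]
  exact (indep_setOf_eq_of_adj_ne hc 1).isAcyclic_induce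

lemma IsAcyclic3Colouring.nearBipartite {c : V → Fin 3} (hc : IsAcyclic3Colouring G c) :
    NearBipartite G := by
  have hcompl : {v | c v = 0}ᶜ = {v | c v = 1 ∨ c v = 2} := by
    ext v
    simp only [mem_compl_iff, mem_ofPred_eq]
    omega
  refine nearBipartite_of_indep_of_isAcyclic_induce_compl (indep_setOf_eq_of_adj_ne hc.1 0) ?_
  rw [hcompl]
  exact hc.2 1 2

lemma SimpleGraph.isBipartite_completeBipartiteGraph (α β : Type*) :
    (completeBipartiteGraph α β).IsBipartite := by
  simpa using (CompleteBipartiteGraph.bicoloring α β).colorable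

lemma SimpleGraph.IsAcyclic.eq_of_adj_of_adj (hG : G.IsAcyclic) {u v w₁ w₂ : V} (huv : u ≠ v)
    (hu₁ : G.Adj u w₁) (h₁v : G.Adj w₁ v) (hu₂ : G.Adj u w₂) (h₂v : G.Adj w₂ v) : w₁ = w₂ := by
  have hp₁ : (Walk.cons hu₁ (Walk.cons h₁v Walk.nil)).IsPath := by
    simp [huv, hu₁.ne, h₁v.ne]
  have hp₂ : (Walk.cons hu₂ (Walk.cons h₂v Walk.nil)).IsPath := by
    simp [huv, hu₂.ne, h₂v.ne]
  have hpath : (⟨_, hp₁⟩ : G.Path u v) = ⟨_, hp₂⟩ := (hG.subsingleton_path u v).elim _ _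
  simpa using congrArg (fun p : G.Path u v => p.1.support) hpath

/-- Pigeonhole: the neighbours of `w` avoid the colour of `w`. -/
lemma exists_ne_colour_eq_of_forall_adj {C ι : Type*} [Fintype C] [Fintype ι] {c : V → C}
    (hc : ∀ u v, G.Adj u v → c u ≠ c v) (hι : Fintype.card C ≤ Fintype.card ι) {f : ι → V}
    {w : V} (hw : ∀ i, G.Adj (f i) w) : ∃ i j, i ≠ j ∧ c (f i) = c (f j) := by
  classical
  let g : ι → {k // k ≠ c w} := fun i => ⟨c (f i), hc _ _ (hw i)⟩
  have hcard : Fintype.card {k // k ≠ c w} < Fintype.card ι := by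
    have hpos : 0 < Fintype.card C := Fintype.card_pos_iff.2 ⟨c w⟩
    rw [Fintype.card_subtype_compl, Fintype.card_subtype_eq]
    omega
  obtain ⟨i, j, hij, hg⟩ := Fintype.exists_ne_map_eq_of_card_lt g hcard
  exact ⟨i, j, hij, congrArg Subtype.val hg⟩

lemma not_isAcyclic3Colouring_completeBipartiteGraph {α β : Type*} [Fintype α] [Fintype β]
    (hα : 3 ≤ Fintype.card α) (hβ : 3 ≤ Fintype.card β) (c : α ⊕ β → Fin 3) :
    ¬ IsAcyclic3Colouring (completeBipartiteGraph α β) c := by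
  rintro ⟨hproper, hforest⟩
  obtain ⟨a⟩ : Nonempty α := Fintype.card_pos_iff.1 (by omega)
  obtain ⟨b⟩ : Nonempty β := Fintype.card_pos_iff.1 (by omega)
  obtain ⟨a₁, a₂, ha, hca⟩ := exists_ne_colour_eq_of_forall_adj hproper
    (by simpa using hα) (f := Sum.inl) (w := Sum.inr b) (by simp)
  obtain ⟨b₁, b₂, hb, hcb⟩ := exists_ne_colour_eq_of_forall_adj hproper
    (by simpa using hβ) (f := Sum.inr) (w := Sum.inl a) (by simp)
  let S : Set (α ⊕ β) := {v | c v = c (.inl a₁) ∨ c v = c (.inr b₁)}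
  have hS : (completeBipartiteGraph α β |>.induce S).IsAcyclic := hforest _ _
  have hb₁ : (⟨.inr b₁, .inr rfl⟩ : S) = ⟨.inr b₂, .inr hcb.symm⟩ :=
    hS.eq_of_adj_of_adj (u := ⟨.inl a₁, .inl rfl⟩) (v := ⟨.inl a₂, .inl hca.symm⟩)
      (by simpa [Subtype.ext_iff] using ha) (by simp) (by simp) (by simp) (by simp)
  exact hb (by simpa using hb₁)

end

/-- Every graph admitting an acyclic 3-colouring is near-bipartite, but there exists a
near-bipartite (finite) graph with no acyclic 3-colouring. -/
theorem stmt11 :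
    (∀ (V : Type) [Fintype V] (G : SimpleGraph V) (c : V → Fin 3),
        IsAcyclic3Colouring G c → NearBipartite G) ∧
    ∃ (V : Type) (_ : Fintype V) (G : SimpleGraph V), NearBipartite G ∧
      ¬ ∃ c : V → Fin 3, IsAcyclic3Colouring G c :=
  ⟨fun _ _ _ _ hc => hc.nearBipartite,
    ⟨Fin 3 ⊕ Fin 3, inferInstance, completeBipartiteGraph _ _,
      (isBipartite_completeBipartiteGraph _ _).nearBipartite,
      fun ⟨c, hc⟩ => not_isAcyclic3Colouring_completeBipartiteGraph (by simp) (by simp) c hc⟩⟩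
end

section
/- Let G be a connected k-regular graph (k ≥ 3) containing no K_{k+1}. If C is a connected induced subgraph with N(C) = {u,v} for non-adjacent vertices u,v, and C is a clique, then C has either k-1 or k vertices; if |C| = k-1 then every vertex of C is adjacent to both u and v, and if |C| = k then every vertex of C is adjacent to exactly one of u and v, and neither u nor v is adjacent to all vertices of C. -/
open SimpleGraph Set

/-
Every vertex `c` of the clique `C` sees the other `|C| - 1` vertices of `C`, and otherwise only
vertices of `N(C) = {u, v}`, so `k = |C| - 1 + [c ~ u] + [c ~ v]`. Both `u` and `v` have a
neighbour in `C`, which forces `|C| ∈ {k - 1, k}`; for `|C| = k - 1` both indicators are `1`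
at every `c`, for `|C| = k` exactly one of them is.
-/

section

variable {V : Type*}

theorem Set.ncard_pair_inter {u v : V} (huv : u ≠ v) (s : Set V) [DecidablePred (· ∈ s)] :
    ({u, v} ∩ s).ncard = (if u ∈ s then 1 else 0) + (if v ∈ s then 1 else 0) := by
  by_cases hu : u ∈ s <;> by_cases hv : v ∈ s <;>
    simp [hu, hv, Set.insert_inter_of_mem, Set.insert_inter_of_notMem, ncard_pair huv]

namespace SimpleGraph

variable {G : SimpleGraph V} {C N : Set V} {c : V}

theorem neighborSet_eq_of_isClique (hC : G.IsClique C)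
    (hN : {w | w ∉ C ∧ ∃ c ∈ C, G.Adj c w} = N) (hc : c ∈ C) :
    G.neighborSet c = (C \ {c}) ∪ (N ∩ G.neighborSet c) := by
  ext w
  by_cases hw : w ∈ C
  · simp only [mem_neighborSet, mem_union, mem_sdiff, hw, mem_singleton_iff, true_and]
    refine ⟨fun hcw ↦ .inl (G.ne_of_adj hcw).symm, ?_⟩
    rintro (hwc | ⟨-, hcw⟩)
    exacts [hC hc hw (Ne.symm hwc), hcw]
  · simp only [mem_neighborSet, mem_union, mem_sdiff, hw, false_and, false_or, mem_inter_iff,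
      iff_and_self, ← hN]
    exact fun hcw ↦ ⟨hw, c, hc, hcw⟩

theorem ncard_neighborSet_of_isClique (hC : G.IsClique C) (hCfin : C.Finite) (hNfin : N.Finite)
    (hN : {w | w ∉ C ∧ ∃ c ∈ C, G.Adj c w} = N) (hc : c ∈ C) :
    (G.neighborSet c).ncard = C.ncard - 1 + (N ∩ G.neighborSet c).ncard := by
  have hdisj : Disjoint (C \ {c}) (N ∩ G.neighborSet c) := by
    rw [Set.disjoint_left]
    rintro w ⟨hwC, -⟩ ⟨hwN, -⟩
    exact (hN ▸ hwN : w ∈ {w | w ∉ C ∧ _}).1 hwC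
  conv_lhs => rw [neighborSet_eq_of_isClique hC hN hc]
  rw [ncard_union_eq hdisj hCfin.sdiff (hNfin.inter_of_left _),
    ncard_sdiff_singleton_of_mem hc]

theorem ncard_neighborSet_of_isClique_of_pair [Fintype V] [DecidableRel G.Adj] {u v : V}
    (hC : G.IsClique C) (huv : u ≠ v) (hN : {w | w ∉ C ∧ ∃ c ∈ C, G.Adj c w} = {u, v}) (hc : c ∈ C) :
    (G.neighborSet c).ncard =
      C.ncard - 1 + ((if G.Adj c u then 1 else 0) + (if G.Adj c v then 1 else 0)) := by
  rw [ncard_neighborSet_of_isClique hC C.toFinite (toFinite _) hN hc, ncard_pair_inter huv]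
  simp only [mem_neighborSet]

end SimpleGraph

end

theorem stmt19_general {V : Type*} [Fintype V] (k : ℕ) (G : SimpleGraph V)
    (hreg : ∀ v : V, (G.neighborSet v).ncard = k)
    (C : Set V) (u v : V) (huv : u ≠ v)
    (hclique : ∀ a ∈ C, ∀ b ∈ C, a ≠ b → G.Adj a b)
    (hnbhd : {w : V | w ∉ C ∧ ∃ c ∈ C, G.Adj c w} = {u, v}) :
    (C.ncard = k - 1 ∨ C.ncard = k) ∧
    (C.ncard = k - 1 → ∀ c ∈ C, G.Adj u c ∧ G.Adj v c) ∧
    (C.ncard = k →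
      (∀ c ∈ C, (G.Adj u c ↔ ¬ G.Adj v c)) ∧
      ¬ (∀ c ∈ C, G.Adj u c) ∧ ¬ (∀ c ∈ C, G.Adj v c)) := by
  classical
  have hdeg : ∀ c ∈ C,
      C.ncard - 1 + ((if G.Adj c u then 1 else 0) + (if G.Adj c v then 1 else 0)) = k :=
    fun c hc ↦ (G.ncard_neighborSet_of_isClique_of_pair hclique huv hnbhd hc).symm.trans (hreg c)
  have hbdry : ∀ w ∈ ({u, v} : Set V), ∃ c ∈ C, G.Adj c w := fun w hw ↦ (hnbhd.symm ▸ hw).2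
  obtain ⟨cu, hcu, hcu_adj⟩ := hbdry u (by simp)
  obtain ⟨cv, hcv, hcv_adj⟩ := hbdry v (by simp)
  have hCpos : 0 < C.ncard := (ncard_pos C.toFinite).2 ⟨cu, hcu⟩
  have hcard : C.ncard = k - 1 ∨ C.ncard = k := by
    have := hdeg cu hcu
    split_ifs at this <;> omega
  refine ⟨hcard, fun hCk1 c hc ↦ ?_, fun hCk ↦ ?_⟩
  · have := hdeg c hc
    by_cases hu : G.Adj c u <;> by_cases hv : G.Adj c v <;>
      simp only [hu, hv, if_true, if_false] at this <;> first | omega | exact ⟨hu.symm, hv.symm⟩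
  · have hxor : ∀ c ∈ C, (G.Adj u c ↔ ¬ G.Adj v c) := fun c hc ↦ by
      have := hdeg c hc
      rw [G.adj_comm u, G.adj_comm v]
      by_cases hu : G.Adj c u <;> by_cases hv : G.Adj c v <;>
        simp only [hu, hv, if_true, if_false] at this <;> first | omega | tauto
    exact ⟨hxor, fun hall ↦ (hxor cv hcv).1 (hall cv hcv) hcv_adj.symm,
      fun hall ↦ (hxor cu hcu).1 hcu_adj.symm (hall cu hcu)⟩

/-- In a connected `k`-regular graph (`k ≥ 3`) with no `K_{k+1}`: if a clique `C` has
neighbourhood exactly `{u, v}` for non-adjacent `u ≠ v`, then `|C| ∈ {k-1, k}`;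
if `|C| = k-1` then every vertex of `C` is adjacent to both `u` and `v`; and if
`|C| = k` then every vertex of `C` is adjacent to exactly one of `u` and `v`, and
neither `u` nor `v` is adjacent to all vertices of `C`. -/
theorem stmt19 {V : Type*} [Fintype V] (k : ℕ) (hk : 3 ≤ k) (G : SimpleGraph V)
    (hconn : G.Connected)
    (hreg : ∀ v : V, (G.neighborSet v).ncard = k)
    (hfree : G.CliqueFree (k + 1))
    (C : Set V) (u v : V) (huv : u ≠ v) (hnadj : ¬ G.Adj u v)
    (hclique : ∀ a ∈ C, ∀ b ∈ C, a ≠ b → G.Adj a b)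
    (hnbhd : {w : V | w ∉ C ∧ ∃ c ∈ C, G.Adj c w} = {u, v}) :
    (C.ncard = k - 1 ∨ C.ncard = k) ∧
    (C.ncard = k - 1 → ∀ c ∈ C, G.Adj u c ∧ G.Adj v c) ∧
    (C.ncard = k →
      (∀ c ∈ C, (G.Adj u c ↔ ¬ G.Adj v c)) ∧
      ¬ (∀ c ∈ C, G.Adj u c) ∧ ¬ (∀ c ∈ C, G.Adj v c)) :=
  stmt19_general k G hreg C u v huv hclique hnbhd
end
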